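/- arXiv:2102.09804 — 8 statements merged into one kernel-verified Lean document; each statement's English description precedes it below -/
import Mathlib

section
/- Let H ∈ ℝ^{n×n} be symmetric positive definite with eigenvalues μ₁,…,μ_n > 0, let α > 0, ε > 0, β₁, β₂ ∈ (0,1), and set s = α/ε and φ_i = s(1−β₁)μ_i. Consider the 3n×3n block matrix J with block rows [β₁ I, 0, (1−β₁)H], [0, β₂ I, 0], [−sβ₁ I, 0, I − s(1−β₁)H] (the Jacobian of the autonomous ADAM map at the fixed point (0,0,w⋆) where H = ∇²f(w⋆)). Then the characteristic polynomial of J factors as det(J − λI) = (β₂ − λ)^n · ∏_{i=1}^n (λ² − (1 + β₁ − φ_i)λ + β₁); equivalently, the eigenvalues of J (over ℂ) are λ_{1;i} = β₂ and λ_{2,3;i} = ((β₁ + 1 − φ_i) ± √((β₁ + 1 − φ_i)² − 4β₁))/2 for i = 1,…,n. -/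
/-! Taking the Schur complement of the scalar block `(β₁ - λ) I` turns `det (J - λ I)` into
`(β₁ - λ)ⁿ (β₂ - λ)ⁿ det ((1 - λ) I + c H)` with `c = s (1 - β₁) λ / (β₁ - λ)`, and the last
determinant is `∏ᵢ (1 - λ + c μᵢ)` by evaluating the characteristic polynomial of `H`. Both sides
are continuous in `λ`, which recovers the excluded value `λ = β₁`. -/

open Polynomial

/-- The Jacobian of the autonomous ADAM map at the fixed point `(0,0,wstar)`, as a
`3n × 3n` block matrix with block rows `[β₁ I, 0, (1−β₁)H]`, `[0, β₂ I, 0]`,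
`[−sβ₁ I, 0, I − s(1−β₁)H]`, where `H = ∇²f(wstar)` and `s = α/ε`. -/
noncomputable def adamJacobian {n : ℕ} (β₁ β₂ s : ℝ) (H : Matrix (Fin n) (Fin n) ℝ) :
    Matrix (Fin n ⊕ (Fin n ⊕ Fin n)) (Fin n ⊕ (Fin n ⊕ Fin n)) ℝ :=
  Matrix.fromBlocks
    (β₁ • (1 : Matrix (Fin n) (Fin n) ℝ))
    (Matrix.fromCols 0 ((1 - β₁) • H))
    (Matrix.fromRows 0 ((-(s * β₁)) • (1 : Matrix (Fin n) (Fin n) ℝ)))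
    (Matrix.fromBlocks (β₂ • (1 : Matrix (Fin n) (Fin n) ℝ)) 0 0
      ((1 : Matrix (Fin n) (Fin n) ℝ) - (s * (1 - β₁)) • H))

open Matrix

namespace Matrix

variable {K ι m : Type*} [Field K] [Fintype ι] [DecidableEq ι] [Fintype m] [DecidableEq m]

theorem det_smul_one_add_smul_of_charpoly_eq_prod {M : Matrix ι ι K} {μ : ι → K}
    (hM : M.charpoly = ∏ i, (X - C (μ i))) (c d : K) :
    (c • (1 : Matrix ι ι K) + d • M).det = ∏ i, (c + d * μ i) := by
  rcases eq_or_ne d 0 with rfl | hd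
  · simp
  have hscalar : c • (1 : Matrix ι ι K) + d • M = (-d) • (scalar ι (-c / d) - M) := by
    rw [smul_sub, scalar_apply, ← smul_one_eq_diagonal, smul_smul]
    field_simp
    module
  rw [hscalar, det_smul, ← eval_charpoly, hM, eval_prod, ← Finset.card_univ,
    ← Finset.prod_const, ← Finset.prod_mul_distrib]
  refine Finset.prod_congr rfl fun i _ => ?_
  simp only [eval_sub, eval_X, eval_C]
  field_simp
  ring

theorem det_fromBlocks_smul_one₁₁ {a : K} (ha : a ≠ 0) (B : Matrix ι m K) (C : Matrix m ι K)
    (D : Matrix m m K) :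
    (fromBlocks (a • 1) B C D).det = a ^ Fintype.card ι * (D - a⁻¹ • (C * B)).det := by
  have hinv : a • (1 : Matrix ι ι K) * a⁻¹ • 1 = 1 := by
    rw [smul_mul_smul_comm, mul_inv_cancel₀ ha, one_mul, one_smul]
  let := invertibleOfRightInverse _ _ hinv
  rw [det_fromBlocks₁₁, invOf_eq_right_inv hinv, det_smul, det_one, mul_one, Matrix.mul_smul,
    Matrix.mul_one, Matrix.smul_mul]

end Matrix

section adamJacobian

variable {n : ℕ} (β₁ β₂ s lam : ℝ) (H : Matrix (Fin n) (Fin n) ℝ)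

theorem adamJacobian_sub_smul_one :
    adamJacobian β₁ β₂ s H - lam • 1 =
      fromBlocks ((β₁ - lam) • 1) (fromCols 0 ((1 - β₁) • H)) (fromRows 0 ((-(s * β₁)) • 1))
        (fromBlocks ((β₂ - lam) • 1) 0 0 ((1 - lam) • 1 - (s * (1 - β₁)) • H)) := by
  rw [adamJacobian, ← fromBlocks_one, ← fromBlocks_one, fromBlocks_smul, fromBlocks_smul,
    sub_eq_add_neg, fromBlocks_neg, fromBlocks_neg, fromBlocks_add, fromBlocks_add]
  exact fromBlocks_inj.2 ⟨by module, by module, by module,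
    fromBlocks_inj.2 ⟨by module, by module, by module, by module⟩⟩

theorem det_adamJacobian_sub_smul_one_of_ne {μ : Fin n → ℝ}
    (hH : H.charpoly = ∏ i, (X - C (μ i))) (hlam : lam ≠ β₁) :
    (adamJacobian β₁ β₂ s H - lam • 1).det =
      (β₂ - lam) ^ n * ∏ i, (lam ^ 2 - (1 + β₁ - s * (1 - β₁) * μ i) * lam + β₁) := by
  have hβ : β₁ - lam ≠ 0 := sub_ne_zero.2 hlam.symm
  have hschur : fromBlocks ((β₂ - lam) • (1 : Matrix (Fin n) (Fin n) ℝ)) 0 0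
        ((1 - lam) • 1 - (s * (1 - β₁)) • H) -
        (β₁ - lam)⁻¹ • (fromRows 0 ((-(s * β₁)) • (1 : Matrix (Fin n) (Fin n) ℝ)) *
          fromCols 0 ((1 - β₁) • H)) =
      fromBlocks ((β₂ - lam) • 1) 0 0
        ((1 - lam) • 1 + (s * (1 - β₁) * lam / (β₁ - lam)) • H) := by
    rw [fromRows_mul_fromCols]
    ext (i | i) (j | j) <;> simp
    field_simp
    ring
  rw [adamJacobian_sub_smul_one, det_fromBlocks_smul_one₁₁ hβ, hschur, det_fromBlocks_zero₂₁,
    det_smul, det_one, det_smul_one_add_smul_of_charpoly_eq_prod hH, Fintype.card_fin, mul_one,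
    mul_left_comm, ← Fin.prod_const n (β₁ - lam), ← Finset.prod_mul_distrib]
  congr 1
  refine Finset.prod_congr rfl fun i _ => ?_
  field_simp
  ring

theorem det_adamJacobian_sub_smul_one {μ : Fin n → ℝ} (hH : H.charpoly = ∏ i, (X - C (μ i))) :
    (adamJacobian β₁ β₂ s H - lam • 1).det =
      (β₂ - lam) ^ n * ∏ i, (lam ^ 2 - (1 + β₁ - s * (1 - β₁) * μ i) * lam + β₁) := by
  refine congrFun (Continuous.ext_on (dense_compl_singleton β₁) ?_ (by fun_prop)
    fun x hx => det_adamJacobian_sub_smul_one_of_ne β₁ β₂ s x H hH hx) lam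
  exact (continuous_const.sub (continuous_id.smul continuous_const)).matrix_det

end adamJacobian

theorem stmt2_general {n : ℕ} (H : Matrix (Fin n) (Fin n) ℝ) (μ : Fin n → ℝ)
    (hchar : H.charpoly = ∏ i, (X - C (μ i)))
    (α ε β₁ β₂ : ℝ) :
    ∀ lam : ℝ,
      (adamJacobian β₁ β₂ (α / ε) H - lam • 1).det =
        (β₂ - lam) ^ n *
          ∏ i, (lam ^ 2 - (1 + β₁ - (α / ε) * (1 - β₁) * μ i) * lam + β₁) :=
  fun lam => det_adamJacobian_sub_smul_one β₁ β₂ (α / ε) lam H hchar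

/-- The characteristic polynomial of the ADAM Jacobian at the fixed point factors as
`det(J − λI) = (β₂ − λ)^n · ∏ᵢ (λ² − (1 + β₁ − φᵢ)λ + β₁)` with
`φᵢ = (α/ε)(1−β₁)μᵢ`, where `μ₁,…,μₙ` are the eigenvalues of the symmetric positive
definite matrix `H`. -/
theorem stmt2 {n : ℕ} (H : Matrix (Fin n) (Fin n) ℝ) (μ : Fin n → ℝ)
    (hsymm : H.IsSymm) (hpd : H.PosDef) (hμ : ∀ i, 0 < μ i)
    (hchar : H.charpoly = ∏ i, (X - C (μ i)))
    (α ε β₁ β₂ : ℝ) (hα : 0 < α) (hε : 0 < ε)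
    (hβ₁ : β₁ ∈ Set.Ioo (0 : ℝ) 1) (hβ₂ : β₂ ∈ Set.Ioo (0 : ℝ) 1) :
    ∀ lam : ℝ,
      (adamJacobian β₁ β₂ (α / ε) H - lam • 1).det =
        (β₂ - lam) ^ n *
          ∏ i, (lam ^ 2 - (1 + β₁ - (α / ε) * (1 - β₁) * μ i) * lam + β₁) :=
  stmt2_general H μ hchar α ε β₁ β₂
end

section
/- Let 0 < β₁ < 1 and 0 < φ < 2β₁ + 2. Then every complex root λ of the quadratic λ² − (1 + β₁ − φ)λ + β₁ = 0 satisfies |λ| < 1. Moreover, if (1 + β₁ − φ)² − 4β₁ < 0 (complex conjugate roots), then |λ| = √β₁. -/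
/-!
Write `λ = x + iy` and `b = 1 + β₁ − φ`, so that `|b| < 1 + β₁`. The imaginary part of the
equation reads `y (2x − b) = 0`. A non-real root therefore has `2x = b`, and the real part of
the equation then gives `|λ|² = x² + y² = β₁ < 1`; a negative discriminant forces this case.
A real root `x ≥ 1` would give `x² + β₁ = bx < (1 + β₁)x`, i.e. `(x − 1)(x − β₁) < 0`, which
is impossible since `β₁ < 1 ≤ x`; symmetrically `x ≤ −1` is impossible.
-/

theorem abs_lt_one_of_sq_sub_mul_add_eq_zero {b c x : ℝ} (h : x ^ 2 - b * x + c = 0)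
    (hb : |b| < 1 + c) (hc : c < 1) : |x| < 1 := by
  rw [abs_lt] at hb ⊢
  constructor <;> nlinarith

namespace Complex

variable {b c : ℝ} {z : ℂ}

theorem re_im_eq_zero_of_sq_sub_mul_add_eq_zero (h : z ^ 2 - (b : ℂ) * z + (c : ℂ) = 0) :
    z.re ^ 2 - z.im ^ 2 - b * z.re + c = 0 ∧ z.im * (2 * z.re - b) = 0 := by
  have hre := congrArg re h
  have him := congrArg im h
  simp only [sub_re, add_re, sub_im, add_im, mul_re, mul_im, pow_two, ofReal_re, ofReal_im,
    zero_re, zero_im] at hre him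
  constructor <;> linarith

theorem normSq_eq_of_sq_sub_mul_add_eq_zero (h : z ^ 2 - (b : ℂ) * z + (c : ℂ) = 0)
    (him : z.im ≠ 0) : normSq z = c := by
  obtain ⟨hre, hmul⟩ := re_im_eq_zero_of_sq_sub_mul_add_eq_zero h
  have hb : b = 2 * z.re := by linarith [(mul_eq_zero.1 hmul).resolve_left him]
  rw [normSq_apply]
  subst hb
  linarith

theorem im_ne_zero_of_sq_sub_mul_add_eq_zero (h : z ^ 2 - (b : ℂ) * z + (c : ℂ) = 0)
    (hdisc : b ^ 2 - 4 * c < 0) : z.im ≠ 0 := by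
  intro him
  have hre := (re_im_eq_zero_of_sq_sub_mul_add_eq_zero h).1
  rw [him] at hre
  nlinarith [sq_nonneg (2 * z.re - b)]

theorem norm_eq_sqrt_of_sq_sub_mul_add_eq_zero (h : z ^ 2 - (b : ℂ) * z + (c : ℂ) = 0)
    (hdisc : b ^ 2 - 4 * c < 0) : ‖z‖ = √c := by
  rw [norm_def,
    normSq_eq_of_sq_sub_mul_add_eq_zero h (im_ne_zero_of_sq_sub_mul_add_eq_zero h hdisc)]

theorem norm_lt_one_of_sq_sub_mul_add_eq_zero (h : z ^ 2 - (b : ℂ) * z + (c : ℂ) = 0)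
    (hb : |b| < 1 + c) (hc : c < 1) : ‖z‖ < 1 := by
  by_cases him : z.im = 0
  · have hre := (re_im_eq_zero_of_sq_sub_mul_add_eq_zero h).1
    rw [him] at hre
    rw [← re_add_im z, him, ofReal_zero, zero_mul, add_zero, norm_real, Real.norm_eq_abs]
    exact abs_lt_one_of_sq_sub_mul_add_eq_zero (by linarith) hb hc
  · rw [← sq_lt_one_iff₀ (norm_nonneg z), Complex.sq_norm,
      normSq_eq_of_sq_sub_mul_add_eq_zero h him]
    exact hc

end Complex

theorem stmt3_general (β₁ φ : ℝ) (hβ₁1 : β₁ < 1)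
    (hφ0 : 0 < φ) (hφ : φ < 2 * β₁ + 2) :
    ∀ lam : ℂ, lam ^ 2 - ((1 + β₁ - φ : ℝ) : ℂ) * lam + ((β₁ : ℝ) : ℂ) = 0 →
      ‖lam‖ < 1 ∧
      ((1 + β₁ - φ) ^ 2 - 4 * β₁ < 0 → ‖lam‖ = Real.sqrt β₁) := by
  intro lam h
  have hb : |1 + β₁ - φ| < 1 + β₁ := abs_lt.2 ⟨by linarith, by linarith⟩
  exact ⟨Complex.norm_lt_one_of_sq_sub_mul_add_eq_zero h hb hβ₁1,
    Complex.norm_eq_sqrt_of_sq_sub_mul_add_eq_zero h⟩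

/-- Every complex root `λ` of the quadratic `λ² − (1 + β₁ − φ)λ + β₁ = 0` with
`0 < β₁ < 1` and `0 < φ < 2β₁ + 2` satisfies `|λ| < 1`; moreover, in the complex
conjugate case `(1 + β₁ − φ)² − 4β₁ < 0` one has `|λ| = √β₁`. -/
theorem stmt3 (β₁ φ : ℝ) (hβ₁0 : 0 < β₁) (hβ₁1 : β₁ < 1)
    (hφ0 : 0 < φ) (hφ : φ < 2 * β₁ + 2) :
    ∀ lam : ℂ, lam ^ 2 - ((1 + β₁ - φ : ℝ) : ℂ) * lam + ((β₁ : ℝ) : ℂ) = 0 →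
      ‖lam‖ < 1 ∧
      ((1 + β₁ - φ) ^ 2 - 4 * β₁ < 0 → ‖lam‖ = Real.sqrt β₁) :=
  stmt3_general β₁ φ hβ₁1 hφ0 hφ
end

section
/- Let H ∈ ℝ^{n×n} be symmetric positive definite with eigenvalues μ₁,…,μ_n > 0, let α > 0, ε > 0, β₁, β₂ ∈ (0,1), s = α/ε, and assume (α/ε)·max_i μ_i·(1−β₁) < 2β₁ + 2. Then the spectral radius of the 3n×3n block matrix J with block rows [β₁ I, 0, (1−β₁)H], [0, β₂ I, 0], [−sβ₁ I, 0, I − s(1−β₁)H] is strictly less than 1. -/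
/-!
An eigenvector `(a, b, c)` of the Jacobian either has `b ≠ 0`, and then the eigenvalue is
`β₂`, or `b = 0`; eliminating `a` then shows that `c` is an eigenvector of `H`, for some
eigenvalue `μᵢ`, and that the eigenvalue `λ` of the Jacobian is a root of
`z² - (1 + β₁ - s(1 - β₁)μᵢ) z + β₁`. By the Schur–Cohn (Jury) criterion, both roots of a real
quadratic `z² - t z + b` lie in the open unit disc as soon as `|b| < 1` and `|t| < 1 + b`;
the hypothesis on `s μᵢ (1 - β₁)` is exactly the lower half of the second inequality.
-/

open Polynomial

open Matrix

theorem Complex.norm_lt_one_of_sq_sub_mul_add_eq_zero_s4 {t b : ℝ} {z : ℂ} (hb : |b| < 1)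
    (ht : |t| < 1 + b) (hz : z ^ 2 - t * z + b = 0) : ‖z‖ < 1 := by
  obtain ⟨htl, htr⟩ := abs_lt.mp ht
  obtain ⟨hbl, hbr⟩ := abs_lt.mp hb
  have hre : z.re ^ 2 - z.im ^ 2 - t * z.re + b = 0 := by
    simpa [sq] using congrArg Complex.re hz
  have him : z.im * (2 * z.re - t) = 0 := by
    have hz_im : z.re * z.im + z.im * z.re - t * z.im = 0 := by
      simpa [sq] using congrArg Complex.im hz
    linear_combination hz_im
  rw [← sq_lt_one_iff₀ (norm_nonneg z), Complex.sq_norm, Complex.normSq_apply]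
  rcases mul_eq_zero.mp him with hy | hre_eq
  · -- A real root outside `(-1, 1)` would, as `1 ∓ t + b > 0`, have its partner root on the
    -- same side of `±1`, making the product `b` of the roots exceed `1`.
    rw [hy] at hre ⊢
    have : z.re < 1 := by
      by_contra! h
      nlinarith
    have : -1 < z.re := by
      by_contra! h
      nlinarith
    nlinarith
  · -- a non-real root is conjugate to the other one, so `‖z‖² = b`
    nlinarith

theorem Matrix.mem_spectrum_iff_exists_mulVec_eq_smul {ι K : Type*} [Fintype ι] [DecidableEq ι]
    [Field K] {A : Matrix ι ι K} {r : K} :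
    r ∈ spectrum K A ↔ ∃ v, v ≠ 0 ∧ A *ᵥ v = r • v := by
  rw [← spectrum_toLin', ← Module.End.hasEigenvalue_iff_mem_spectrum]
  constructor
  · intro h
    obtain ⟨v, hv⟩ := h.exists_hasEigenvector
    exact ⟨v, hv.2, by simpa using Module.End.mem_eigenspace_iff.mp hv.1⟩
  · rintro ⟨v, hv0, hv⟩
    exact Module.End.hasEigenvalue_of_hasEigenvector
      ⟨Module.End.mem_eigenspace_iff.mpr (by simpa using hv), hv0⟩

theorem Matrix.exists_eq_of_mem_spectrum_map {ι K L : Type*} [Fintype ι] [DecidableEq ι]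
    [Field K] [Field L] (f : K →+* L) {A : Matrix ι ι K} {μ : ι → K}
    (hchar : A.charpoly = ∏ i, (X - C (μ i))) {r : L} (hr : r ∈ spectrum L (A.map f)) :
    ∃ i, r = f (μ i) := by
  rw [mem_spectrum_iff_isRoot_charpoly, charpoly_map, hchar, IsRoot, eval_map,
    eval₂_finsetProd, Finset.prod_eq_zero_iff] at hr
  obtain ⟨i, -, hi⟩ := hr
  rw [eval₂_sub, eval₂_X, eval₂_C, sub_eq_zero] at hi
  exact ⟨i, hi⟩

section

variable {n : ℕ} {β₁ β₂ s : ℝ} {H : Matrix (Fin n) (Fin n) ℝ}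

theorem adamJacobian_map_mulVec (a b c : Fin n → ℂ) :
    (adamJacobian β₁ β₂ s H).map (fun x : ℝ => (x : ℂ)) *ᵥ Sum.elim a (Sum.elim b c) =
      Sum.elim ((β₁ : ℂ) • a + ((1 - β₁ : ℝ) : ℂ) • (H.map (fun x : ℝ => (x : ℂ)) *ᵥ c))
        (Sum.elim ((β₂ : ℂ) • b)
          (-((s * β₁ : ℝ) : ℂ) • a + c -
            ((s * (1 - β₁) : ℝ) : ℂ) • (H.map (fun x : ℝ => (x : ℂ)) *ᵥ c))) := by
  ext (i | i | i) <;>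
    simp [adamJacobian, mulVec, dotProduct, Fintype.sum_sum_type, one_apply,
      apply_ite Complex.ofReal, ite_mul, sub_mul, Finset.mul_sum, Finset.sum_sub_distrib,
      mul_assoc, add_sub_assoc]

theorem adamJacobian_eigenvector_blocks {a b c : Fin n → ℂ} {lam : ℂ}
    (hv : (adamJacobian β₁ β₂ s H).map (fun x : ℝ => (x : ℂ)) *ᵥ Sum.elim a (Sum.elim b c) =
      lam • Sum.elim a (Sum.elim b c)) (hlam₂ : lam ≠ β₂) :
    ((1 : ℂ) - β₁) • (H.map (fun x : ℝ => (x : ℂ)) *ᵥ c) = (lam - β₁) • a ∧ b = 0 ∧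
      (1 - lam) • c = ((s : ℂ) * lam) • a := by
  rw [adamJacobian_map_mulVec] at hv
  set Hc := H.map (fun x : ℝ => (x : ℂ)) *ᵥ c
  have hA : (β₁ : ℂ) • a + ((1 - β₁ : ℝ) : ℂ) • Hc = lam • a :=
    funext fun i => by simpa using congrFun hv (Sum.inl i)
  have hB : (β₂ : ℂ) • b = lam • b :=
    funext fun i => by simpa using congrFun hv (Sum.inr (Sum.inl i))
  have hC : -((s * β₁ : ℝ) : ℂ) • a + c - ((s * (1 - β₁) : ℝ) : ℂ) • Hc = lam • c :=
    funext fun i => by simpa using congrFun hv (Sum.inr (Sum.inr i))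
  push_cast at hA hC
  refine ⟨by linear_combination (norm := module) hA, ?_,
    by linear_combination (norm := module) hC + (s : ℂ) • hA⟩
  have hB' : (lam - β₂) • b = 0 := by linear_combination (norm := module) -hB
  exact (smul_eq_zero.mp hB').resolve_left (sub_ne_zero.mpr hlam₂)

theorem adamJacobian_eigenvalue_quadratic {μ : Fin n → ℝ}
    (hchar : H.charpoly = ∏ i, (X - C (μ i))) (hs : s ≠ 0) (hβ₁ : β₁ ≠ 1) {lam : ℂ}
    (hlam : lam ∈ spectrum ℂ ((adamJacobian β₁ β₂ s H).map (fun x : ℝ => (x : ℂ))))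
    (hlam₀ : lam ≠ 0) (hlam₂ : lam ≠ β₂) :
    ∃ i, lam ^ 2 - ((1 + β₁ - s * (1 - β₁) * μ i : ℝ) : ℂ) * lam + β₁ = 0 := by
  obtain ⟨v, hv₀, hv⟩ := mem_spectrum_iff_exists_mulVec_eq_smul.mp hlam
  obtain ⟨a, b, c, rfl⟩ : ∃ a b c, v = Sum.elim a (Sum.elim b c) :=
    ⟨v ∘ Sum.inl, v ∘ Sum.inr ∘ Sum.inl, v ∘ Sum.inr ∘ Sum.inr, by ext (i | i | i) <;> rfl⟩
  obtain ⟨hA, rfl, hca⟩ := adamJacobian_eigenvector_blocks hv hlam₂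
  have hs' : (s : ℂ) ≠ 0 := Complex.ofReal_ne_zero.mpr hs
  have hc : c ≠ 0 := by
    rintro rfl
    have ha : a = 0 := by simpa [hs', hlam₀] using hca.symm
    exact hv₀ (by simp [ha])
  have hk : (s : ℂ) * lam * (1 - β₁) ≠ 0 :=
    mul_ne_zero (mul_ne_zero hs' hlam₀) (sub_ne_zero.mpr (by exact_mod_cast hβ₁.symm))
  have hHc : H.map (fun x : ℝ => (x : ℂ)) *ᵥ c =
      ((lam - β₁) * (1 - lam) / ((s : ℂ) * lam * (1 - β₁))) • c := by
    refine smul_right_injective _ hk ?_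
    simp only [smul_smul, mul_div_cancel₀ _ hk]
    linear_combination (norm := module) ((s : ℂ) * lam) • hA - ((lam : ℂ) - β₁) • hca
  obtain ⟨i, hi⟩ := exists_eq_of_mem_spectrum_map Complex.ofRealHom hchar
    (mem_spectrum_iff_exists_mulVec_eq_smul.mpr ⟨c, hc, hHc⟩)
  rw [Complex.ofRealHom_eq_coe, div_eq_iff hk] at hi
  refine ⟨i, ?_⟩
  push_cast
  linear_combination -hi

end

theorem stmt4_general {n : ℕ} (H : Matrix (Fin n) (Fin n) ℝ) (μ : Fin n → ℝ)
    (hμ : ∀ i, 0 < μ i)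
    (hchar : H.charpoly = ∏ i, (X - C (μ i)))
    (α ε β₁ β₂ : ℝ) (hα : 0 < α) (hε : 0 < ε)
    (hβ₁ : β₁ ∈ Set.Ioo (0 : ℝ) 1) (hβ₂ : β₂ ∈ Set.Ioo (0 : ℝ) 1)
    (hcond : ∀ i, α / ε * μ i * (1 - β₁) < 2 * β₁ + 2) :
    ∀ lam ∈ spectrum ℂ ((adamJacobian β₁ β₂ (α / ε) H).map (fun x : ℝ => (x : ℂ))),
      ‖lam‖ < 1 := by
  intro lam hlam
  obtain ⟨hβ₁₀, hβ₁₁⟩ := hβ₁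
  rcases eq_or_ne lam β₂ with rfl | hlam₂
  · simpa [abs_of_pos hβ₂.1] using hβ₂.2
  rcases eq_or_ne lam 0 with rfl | hlam₀
  · simp
  have hs : 0 < α / ε := div_pos hα hε
  obtain ⟨i, hi⟩ := adamJacobian_eigenvalue_quadratic hchar hs.ne' hβ₁₁.ne hlam hlam₀ hlam₂
  refine Complex.norm_lt_one_of_sq_sub_mul_add_eq_zero_s4 ?_ ?_ hi
  · rw [abs_of_pos hβ₁₀]; exact hβ₁₁
  · have := mul_pos (mul_pos hs (hμ i)) (sub_pos.mpr hβ₁₁)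
    rw [abs_lt]
    constructor <;> nlinarith [hcond i]

/-- If `H` is symmetric positive definite with eigenvalues `μᵢ > 0` and
`(α/ε)·μᵢ·(1−β₁) < 2β₁ + 2` for every `i` (i.e. for the maximal eigenvalue), then the
spectral radius of the ADAM Jacobian is strictly less than `1`: every complex eigenvalue
has absolute value `< 1`. -/
theorem stmt4 {n : ℕ} (H : Matrix (Fin n) (Fin n) ℝ) (μ : Fin n → ℝ)
    (hsymm : H.IsSymm) (hpd : H.PosDef) (hμ : ∀ i, 0 < μ i)
    (hchar : H.charpoly = ∏ i, (X - C (μ i)))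
    (α ε β₁ β₂ : ℝ) (hα : 0 < α) (hε : 0 < ε)
    (hβ₁ : β₁ ∈ Set.Ioo (0 : ℝ) 1) (hβ₂ : β₂ ∈ Set.Ioo (0 : ℝ) 1)
    (hcond : ∀ i, α / ε * μ i * (1 - β₁) < 2 * β₁ + 2) :
    ∀ lam ∈ spectrum ℂ ((adamJacobian β₁ β₂ (α / ε) H).map (fun x : ℝ => (x : ℂ))),
      ‖lam‖ < 1 :=
  stmt4_general H μ hμ hchar α ε β₁ β₂ hα hε hβ₁ hβ₂ hcond
end

section
/- Let M ⊆ ℝ^n be a complete (closed) set, T̄ : M → M Lipschitz continuous with constant L < 1, and x⋆ ∈ M the unique fixed point of T̄; assume the open ball B_r(x⋆) is contained in M for some r > 0. Let Θ : ℕ × M → ℝ^n satisfy ‖Θ(t, x)‖ ≤ C β^t ‖x − x⋆‖ for all x ∈ M and t ∈ ℕ, for some C ≥ 0 and 0 < β < 1, and suppose T̄(x) + Θ(t,x) ∈ M whenever defined. Then there exists ε > 0 such that for every x̃₀ ∈ M with ‖x̃₀ − x⋆‖ < ε, the iteration x̃_{t+1} = T̄(x̃_t) + Θ(t, x̃_t)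 is well-defined (stays in M) and converges to x⋆; moreover the convergence is exponential: there exist C̃ ≥ 0, 0 < L̃ < 1 with ‖x̃_t − x⋆‖ ≤ C̃ L̃^t ‖x̃₀ − x⋆‖ for all t. -/
/-- The perturbed iteration `x̃_{t+1} = T̄(x̃_t) + Θ(t, x̃_t)` starting from `x₀`. -/
noncomputable def perturbSeq {E : Type*} [NormedAddCommGroup E]
    (T : E → E) (Θ : ℕ → E → E) (x₀ : E) : ℕ → E
  | 0 => x₀
  | t + 1 => T (perturbSeq T Θ x₀ t) + Θ t (perturbSeq T Θ x₀ t)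

/-- **Convergence to a fixed point under perturbation.** Let `M ⊆ ℝ^n` (modelled by a
finite-dimensional real normed space `E`) be closed (hence complete), `T̄ : M → M` a
contraction with constant `L < 1` and unique fixed point `xstar ∈ M`, with
`B_r(xstar) ⊆ M`. If `‖Θ(t,x)‖ ≤ C βᵗ ‖x − xstar‖` on `M` with `0 < β < 1`, and
`T̄(x) + Θ(t,x) ∈ M` for `x ∈ M`, then for initial values close enough to `xstar` the
perturbed iteration stays in `M` and converges to `xstar` exponentially. -/
theorem stmt6 {E : Type*} [NormedAddCommGroup E] [NormedSpace ℝ E] [FiniteDimensional ℝ E]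
    (M : Set E) (hM : IsClosed M)
    (T : E → E) (hTmaps : Set.MapsTo T M M)
    (L : ℝ) (hL0 : 0 ≤ L) (hL : L < 1)
    (hTlip : ∀ x ∈ M, ∀ y ∈ M, ‖T x - T y‖ ≤ L * ‖x - y‖)
    (xstar : E) (hxM : xstar ∈ M) (hfix : T xstar = xstar)
    (huniq : ∀ y ∈ M, T y = y → y = xstar)
    (r : ℝ) (hr : 0 < r) (hball : Metric.ball xstar r ⊆ M)
    (Θ : ℕ → E → E) (C β : ℝ) (hC : 0 ≤ C) (hβ0 : 0 < β) (hβ1 : β < 1)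
    (hΘ : ∀ t : ℕ, ∀ x ∈ M, ‖Θ t x‖ ≤ C * β ^ t * ‖x - xstar‖)
    (hmaps : ∀ t : ℕ, ∀ x ∈ M, T x + Θ t x ∈ M) :
    ∃ ε > (0 : ℝ), ∃ Ct ≥ (0 : ℝ), ∃ Lt : ℝ, 0 < Lt ∧ Lt < 1 ∧
      ∀ x₀ ∈ M, ‖x₀ - xstar‖ < ε →
        (∀ t : ℕ, perturbSeq T Θ x₀ t ∈ M) ∧
        (∀ t : ℕ, ‖perturbSeq T Θ x₀ t - xstar‖ ≤ Ct * Lt ^ t * ‖x₀ - xstar‖) := by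

  obtain ⟨N, hN⟩ := exists_pow_lt_of_lt_one (div_pos (show (0:ℝ) < 1 - L by linarith) (show (0:ℝ) < 2 * (C + 1) by linarith)) hβ1
  set Lt : ℝ := (1 + L) / 2 with hLtdef
  have hLt0 : 0 < Lt := by simp only [hLtdef]; linarith
  have hLt1 : Lt < 1 := by simp only [hLtdef]; linarith
  set K : ℝ := max (L + C) 1 with hKdef
  have hK1 : (1:ℝ) ≤ K := le_max_right _ _
  have hK0 : (0:ℝ) < K := lt_of_lt_of_le one_pos hK1
  refine ⟨1, one_pos, K ^ N / Lt ^ N, by positivity, Lt, hLt0, hLt1, ?_⟩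
  intro x₀ hx₀ _
  have hmem : ∀ t, perturbSeq T Θ x₀ t ∈ M := by
    intro t; induction t with
    | zero => exact hx₀
    | succ t ih => exact hmaps t _ ih
  refine ⟨hmem, ?_⟩
  have hd0 : (0:ℝ) ≤ ‖x₀ - xstar‖ := norm_nonneg _
  have hstep : ∀ t, ‖perturbSeq T Θ x₀ (t + 1) - xstar‖ ≤
      (L + C * β ^ t) * ‖perturbSeq T Θ x₀ t - xstar‖ := by
    intro t
    have h1 : perturbSeq T Θ x₀ (t + 1) - xstar =
        (T (perturbSeq T Θ x₀ t) - T xstar) + Θ t (perturbSeq T Θ x₀ t) := by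
      show T (perturbSeq T Θ x₀ t) + Θ t (perturbSeq T Θ x₀ t) - xstar = _
      rw [hfix]; abel
    calc ‖perturbSeq T Θ x₀ (t + 1) - xstar‖
        ≤ ‖T (perturbSeq T Θ x₀ t) - T xstar‖ + ‖Θ t (perturbSeq T Θ x₀ t)‖ := by
          rw [h1]; exact norm_add_le _ _
      _ ≤ L * ‖perturbSeq T Θ x₀ t - xstar‖ + C * β ^ t * ‖perturbSeq T Θ x₀ t - xstar‖ :=
          add_le_add (hTlip _ (hmem t) _ hxM) (hΘ t _ (hmem t))
      _ = (L + C * β ^ t) * ‖perturbSeq T Θ x₀ t - xstar‖ := by ring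
  have hfacK : ∀ t : ℕ, L + C * β ^ t ≤ K := by
    intro t
    have h1 : β ^ t ≤ 1 := pow_le_one₀ hβ0.le hβ1.le
    have : C * β ^ t ≤ C := by nlinarith
    calc L + C * β ^ t ≤ L + C := by linarith
      _ ≤ K := le_max_left _ _
  have hfacN : ∀ t : ℕ, N ≤ t → L + C * β ^ t ≤ Lt := by
    intro t ht
    have h1 : β ^ t ≤ β ^ N := pow_le_pow_of_le_one hβ0.le hβ1.le ht
    have h2 : C * β ^ t ≤ (C + 1) * β ^ N := by nlinarith [pow_pos hβ0 t, pow_pos hβ0 N]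
    have h3 : (C + 1) * β ^ N < (1 - L) / 2 := by
      have h5 := mul_lt_mul_of_pos_left hN (show (0:ℝ) < C + 1 by linarith)
      calc (C + 1) * β ^ N < (C + 1) * ((1 - L) / (2 * (C + 1))) := h5
        _ = (1 - L) / 2 := by field_simp
    simp only [hLtdef]; linarith
  -- main induction
  have hmain : ∀ t : ℕ, ‖perturbSeq T Θ x₀ t - xstar‖ ≤
      K ^ (min t N) * Lt ^ (t - N) * ‖x₀ - xstar‖ := by
    intro t; induction t with
    | zero => simp [perturbSeq]
    | succ t ih =>
      have hdnn : (0:ℝ) ≤ ‖perturbSeq T Θ x₀ t - xstar‖ := norm_nonneg _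
      by_cases hcase : N ≤ t
      · have h1 := hstep t
        have h2 := hfacN t hcase
        have hsub : t + 1 - N = (t - N) + 1 := by omega
        have hmin : min (t + 1) N = N := by omega
        have hmin' : min t N = N := by omega
        rw [hsub, hmin]
        calc ‖perturbSeq T Θ x₀ (t + 1) - xstar‖
            ≤ (L + C * β ^ t) * ‖perturbSeq T Θ x₀ t - xstar‖ := h1
          _ ≤ Lt * (K ^ N * Lt ^ (t - N) * ‖x₀ - xstar‖) := by
              have hLCnn : (0:ℝ) ≤ L + C * β ^ t := by positivity
              have := mul_le_mul h2 ih hdnn hLt0.le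
              calc (L + C * β ^ t) * ‖perturbSeq T Θ x₀ t - xstar‖
                  ≤ Lt * (K ^ (min t N) * Lt ^ (t - N) * ‖x₀ - xstar‖) := this
                _ = Lt * (K ^ N * Lt ^ (t - N) * ‖x₀ - xstar‖) := by rw [hmin']
          _ = K ^ N * Lt ^ ((t - N) + 1) * ‖x₀ - xstar‖ := by ring
      · have h1 := hstep t
        have h2 := hfacK t
        have hmin : min (t + 1) N = t + 1 := by omega
        have hmin' : min t N = t := by omega
        have hsub : t + 1 - N = 0 := by omega
        have hsub' : t - N = 0 := by omega
        rw [hmin, hsub, pow_zero]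
        rw [hmin', hsub', pow_zero] at ih
        have hLCnn : (0:ℝ) ≤ L + C * β ^ t := by positivity
        calc ‖perturbSeq T Θ x₀ (t + 1) - xstar‖
            ≤ (L + C * β ^ t) * ‖perturbSeq T Θ x₀ t - xstar‖ := h1
          _ ≤ K * (K ^ t * 1 * ‖x₀ - xstar‖) := mul_le_mul h2 ih hdnn hK0.le
          _ = K ^ (t + 1) * 1 * ‖x₀ - xstar‖ := by ring
  intro t
  have hpow : Lt ^ (t - N) * Lt ^ N ≤ Lt ^ t := by
    by_cases hcase : N ≤ t
    · rw [← pow_add]; rw [Nat.sub_add_cancel hcase]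
    · have hsub : t - N = 0 := by omega
      rw [hsub, pow_zero, one_mul]
      exact pow_le_pow_of_le_one hLt0.le hLt1.le (by omega)
  have hKmin : K ^ (min t N) ≤ K ^ N := pow_le_pow_right₀ hK1 (min_le_right _ _)
  have hLtN : (0:ℝ) < Lt ^ N := pow_pos hLt0 N
  calc ‖perturbSeq T Θ x₀ t - xstar‖
      ≤ K ^ (min t N) * Lt ^ (t - N) * ‖x₀ - xstar‖ := hmain t
    _ ≤ (K ^ N / Lt ^ N) * Lt ^ t * ‖x₀ - xstar‖ := by
        apply mul_le_mul_of_nonneg_right _ hd0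
        rw [div_mul_eq_mul_div, le_div_iff₀ hLtN]
        calc K ^ (min t N) * Lt ^ (t - N) * Lt ^ N
            = K ^ (min t N) * (Lt ^ (t - N) * Lt ^ N) := by ring
          _ ≤ K ^ N * Lt ^ t :=
              mul_le_mul hKmin hpow (by positivity) (by positivity)
end

section
/- Let β₁, β₂ ∈ (0,1) and set β = max{β₁, β₂}. Then for every t ∈ ℕ, | √(1 − β₂^{t+1})/(1 − β₁^{t+1}) − 1 | ≤ (4 / ((1 − β₁)(√(1 − β₂) + (1 − β₁)))) · β^{t+1}. -/
/-- Geometric bound on the deviation of the ADAM bias-correction factor from `1`: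
for `β₁, β₂ ∈ (0,1)` and `β = max {β₁, β₂}`,
`|√(1 − β₂^{t+1})/(1 − β₁^{t+1}) − 1| ≤ (4 / ((1−β₁)(√(1−β₂) + (1−β₁)))) · β^{t+1}`. -/
theorem stmt7 (β₁ β₂ : ℝ) (hβ₁ : β₁ ∈ Set.Ioo (0 : ℝ) 1) (hβ₂ : β₂ ∈ Set.Ioo (0 : ℝ) 1)
    (t : ℕ) :
    |Real.sqrt (1 - β₂ ^ (t + 1)) / (1 - β₁ ^ (t + 1)) - 1| ≤
      4 / ((1 - β₁) * (Real.sqrt (1 - β₂) + (1 - β₁))) * (max β₁ β₂) ^ (t + 1) := by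
  obtain ⟨hb1, hb1'⟩ := hβ₁
  obtain ⟨hb2, hb2'⟩ := hβ₂
  set n := t + 1 with hn
  set b := max β₁ β₂ with hbdef
  have hbn1 : β₁ ^ n ≤ b ^ n := pow_le_pow_left₀ hb1.le (le_max_left _ _) n
  have hbn2 : β₂ ^ n ≤ b ^ n := pow_le_pow_left₀ hb2.le (le_max_right _ _) n
  have ha0 : 0 < β₁ ^ n := pow_pos hb1 n
  have hc0 : 0 < β₂ ^ n := pow_pos hb2 n
  have ha1 : β₁ ^ n ≤ β₁ := pow_le_of_le_one hb1.le hb1'.le (Nat.succ_ne_zero t)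
  have hc1 : β₂ ^ n ≤ β₂ := pow_le_of_le_one hb2.le hb2'.le (Nat.succ_ne_zero t)
  have hden : 0 < 1 - β₁ ^ n := by nlinarith
  have hden1 : 0 < 1 - β₁ := by linarith
  set s := Real.sqrt (1 - β₂ ^ n) with hs
  have hs0 : 0 ≤ s := Real.sqrt_nonneg _
  have hss : s * s = 1 - β₂ ^ n := Real.mul_self_sqrt (by nlinarith)
  have hs1 : s ≤ 1 := by nlinarith
  have hslow : 1 - β₂ ^ n ≤ s := by nlinarith [mul_nonneg hs0 (sub_nonneg.2 hs1)]
  set w := Real.sqrt (1 - β₂) with hw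
  have hw0 : 0 ≤ w := Real.sqrt_nonneg _
  have hww : w * w = 1 - β₂ := Real.mul_self_sqrt (by linarith)
  have hw1 : w ≤ 1 := by nlinarith
  have hD : 0 < (1 - β₁) * (w + (1 - β₁)) := by positivity
  have hbn0 : 0 < b ^ n := pow_pos (lt_max_of_lt_left hb1) n
  have hX : Real.sqrt (1 - β₂ ^ n) / (1 - β₁ ^ n) - 1
      = (s - (1 - β₁ ^ n)) / (1 - β₁ ^ n) := by
    field_simp
    rfl
  rw [hX, abs_div, abs_of_pos hden]
  have hnum : |s - (1 - β₁ ^ n)| ≤ 2 * b ^ n := by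
    rw [abs_le]
    constructor <;> nlinarith
  have step1 : |s - (1 - β₁ ^ n)| / (1 - β₁ ^ n) ≤ 2 * b ^ n / (1 - β₁) :=
    div_le_div₀ (by positivity) hnum hden1 (by linarith)
  have step2 : 2 * b ^ n / (1 - β₁) ≤ 4 / ((1 - β₁) * (w + (1 - β₁))) * b ^ n := by
    rw [div_mul_eq_mul_div, div_le_div_iff₀ hden1 hD]
    nlinarith [mul_nonneg (mul_pos hbn0 hden1).le
      (by linarith : (0:ℝ) ≤ 2 - (w + (1 - β₁)))]
  linarith
end

section
/- Let f : ℝ^n → ℝ^n be Lipschitz continuous with constant L_f and let x⋆ = f(x⋆) be a globally exponentially stable fixed point of the iteration x_{t+1} = f(x_t) (i.e. there exist k ≥ 1, λ > 0 with ‖x_t − x⋆‖ ≤ k‖x₀ − x⋆‖e^{−λt} for all x₀ and t). Let h : ℝ^n → ℝ^n be Lipschitz with constant L_h, h(x⋆) = 0, and ‖h(x)‖ ≤ L_h‖x − x⋆‖ for all x. Then there exists L₀ > 0 such that whenever L_h < L₀, x⋆ is also a globally exponentially stable fixed point of the disturbed iteration x̃_{t+1} = f(x̃_t) + h(x̃_t).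 -/
/-- **Exponential convergence under disturbances.** If `xstar` is a globally
exponentially stable fixed point of `x_{t+1} = f(x_t)` with `f` Lipschitz, then there is
`L₀ > 0` such that for every disturbance `h` that is Lipschitz with constant `Lh < L₀`,
vanishes at `xstar` and satisfies `‖h(x)‖ ≤ Lh‖x − xstar‖`, the point `xstar` is also a
globally exponentially stable fixed point of `x̃_{t+1} = f(x̃_t) + h(x̃_t)`. -/
theorem stmt11 {n : ℕ} (f : (Fin n → ℝ) → (Fin n → ℝ)) (Lf : ℝ) (hLf : 0 ≤ Lf)
    (hflip : ∀ x y, ‖f x - f y‖ ≤ Lf * ‖x - y‖)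
    (xstar : Fin n → ℝ) (hfix : f xstar = xstar)
    (k lam : ℝ) (hk : 1 ≤ k) (hlam : 0 < lam)
    (hstab : ∀ (x₀ : Fin n → ℝ) (t : ℕ),
      ‖f^[t] x₀ - xstar‖ ≤ k * ‖x₀ - xstar‖ * Real.exp (-lam * t)) :
    ∃ L₀ > (0 : ℝ), ∀ (h : (Fin n → ℝ) → (Fin n → ℝ)) (Lh : ℝ), 0 ≤ Lh → Lh < L₀ →
      (∀ x y, ‖h x - h y‖ ≤ Lh * ‖x - y‖) → h xstar = 0 →
      (∀ x, ‖h x‖ ≤ Lh * ‖x - xstar‖) →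
      ∃ k' ≥ (1 : ℝ), ∃ lam' > (0 : ℝ), ∀ (x₀ : Fin n → ℝ) (t : ℕ),
        ‖(fun x => f x + h x)^[t] x₀ - xstar‖ ≤ k' * ‖x₀ - xstar‖ * Real.exp (-lam' * t) := by
  have hk0 : (0:ℝ) < k := lt_of_lt_of_le one_pos hk
  -- choose T with k * exp(-lam T) ≤ 1/2 and T ≥ 1
  obtain ⟨T, hT1, hThalf⟩ : ∃ T : ℕ, 1 ≤ T ∧ k * Real.exp (-lam * T) ≤ 1/2 := by
    obtain ⟨T, hT⟩ := exists_nat_gt (Real.log (2*k) / lam)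
    refine ⟨T + 1, Nat.le_add_left _ _, ?_⟩
    have h2k : (0:ℝ) < 2*k := by linarith
    have h1 : Real.log (2*k) / lam < ((T+1:ℕ):ℝ) := by
      push_cast; push_cast at hT; linarith
    have h2 : Real.log (2*k) < lam * ((T+1:ℕ):ℝ) := by
      rw [div_lt_iff₀ hlam] at h1; linarith
    have h3 : Real.exp (-lam * ((T+1:ℕ):ℝ)) ≤ (2*k)⁻¹ := by
      rw [show -lam * ((T+1:ℕ):ℝ) = -(lam * ((T+1:ℕ):ℝ)) by ring, Real.exp_neg,
        ← Real.exp_log h2k]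
      exact inv_anti₀ (Real.exp_pos _) (Real.exp_le_exp.mpr h2.le)
    calc k * Real.exp (-lam * ((T+1:ℕ):ℝ)) ≤ k * (2*k)⁻¹ := by
          exact mul_le_mul_of_nonneg_left h3 hk0.le
      _ = 1/2 := by field_simp
  have hT0 : (0:ℝ) < (T:ℝ) := by exact_mod_cast hT1
  set M : ℝ := (T:ℝ) * (Lf+1)^T with hM
  have hM0 : 0 ≤ M := by positivity
  refine ⟨min 1 ((4*(M+1))⁻¹), by positivity, ?_⟩
  intro h Lh hLh0 hLhlt hhlip hh0 hhbd
  have hLh1 : Lh ≤ 1 := le_of_lt (lt_of_lt_of_le hLhlt (min_le_left _ _))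
  have hLhM : Lh * M ≤ 1/4 := by
    have h4 : (0:ℝ) < 4*(M+1) := by positivity
    have h5 : Lh * (4*(M+1)) ≤ (4*(M+1))⁻¹ * (4*(M+1)) :=
      mul_le_mul_of_nonneg_right (le_of_lt (lt_of_lt_of_le hLhlt (min_le_right _ _))) h4.le
    rw [inv_mul_cancel₀ h4.ne'] at h5
    nlinarith
  set g : (Fin n → ℝ) → (Fin n → ℝ) := fun x => f x + h x with hg
  have hA : ∀ x, ‖g x - xstar‖ ≤ (Lf + Lh) * ‖x - xstar‖ := by
    intro x
    have : g x - xstar = (f x - f xstar) + h x := by rw [hfix]; simp [hg]; abel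
    rw [this]
    calc ‖(f x - f xstar) + h x‖ ≤ ‖f x - f xstar‖ + ‖h x‖ := norm_add_le _ _
      _ ≤ Lf * ‖x - xstar‖ + Lh * ‖x - xstar‖ := add_le_add (hflip x xstar) (hhbd x)
      _ = (Lf + Lh) * ‖x - xstar‖ := by ring
  have hB : ∀ x (t : ℕ), ‖g^[t] x - xstar‖ ≤ (Lf + Lh)^t * ‖x - xstar‖ := by
    intro x t
    induction t with
    | zero => simp
    | succ t ih =>
      rw [Function.iterate_succ_apply']
      calc ‖g (g^[t] x) - xstar‖ ≤ (Lf + Lh) * ‖g^[t] x - xstar‖ := hA _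
        _ ≤ (Lf + Lh) * ((Lf + Lh)^t * ‖x - xstar‖) := by
            exact mul_le_mul_of_nonneg_left ih (by positivity)
        _ = (Lf + Lh)^(t+1) * ‖x - xstar‖ := by ring
  have hpow : ∀ t : ℕ, (Lf + Lh)^t ≤ (Lf + 1)^t := fun t =>
    pow_le_pow_left₀ (by positivity) (by linarith) t
  have hC : ∀ x (t : ℕ), ‖g^[t] x - f^[t] x‖ ≤ Lh * t * (Lf+1)^t * ‖x - xstar‖ := by
    intro x t
    induction t with
    | zero => simp
    | succ t ih =>
      rw [Function.iterate_succ_apply', Function.iterate_succ_apply']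
      have key : g (g^[t] x) - f (f^[t] x) = (f (g^[t] x) - f (f^[t] x)) + h (g^[t] x) := by
        simp [hg]; abel
      have hb1 : ‖h (g^[t] x)‖ ≤ Lh * ((Lf+1)^t * ‖x - xstar‖) := by
        calc ‖h (g^[t] x)‖ ≤ Lh * ‖g^[t] x - xstar‖ := hhbd _
          _ ≤ Lh * ((Lf + Lh)^t * ‖x - xstar‖) := mul_le_mul_of_nonneg_left (hB x t) hLh0
          _ ≤ Lh * ((Lf+1)^t * ‖x - xstar‖) := by
              apply mul_le_mul_of_nonneg_left _ hLh0
              exact mul_le_mul_of_nonneg_right (hpow t) (norm_nonneg _)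
      rw [key]
      have hnx : 0 ≤ ‖x - xstar‖ := norm_nonneg _
      have hp : (0:ℝ) ≤ (Lf+1)^t := by positivity
      calc ‖(f (g^[t] x) - f (f^[t] x)) + h (g^[t] x)‖
          ≤ ‖f (g^[t] x) - f (f^[t] x)‖ + ‖h (g^[t] x)‖ := norm_add_le _ _
        _ ≤ Lf * ‖g^[t] x - f^[t] x‖ + Lh * ((Lf+1)^t * ‖x - xstar‖) :=
            add_le_add (hflip _ _) hb1
        _ ≤ Lf * (Lh * t * (Lf+1)^t * ‖x - xstar‖) + Lh * ((Lf+1)^t * ‖x - xstar‖) := by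
            exact add_le_add_left (mul_le_mul_of_nonneg_left ih hLf) _
        _ ≤ Lh * ((t:ℝ)+1) * (Lf+1)^(t+1) * ‖x - xstar‖ := by
            have ht0 : (0:ℝ) ≤ (t:ℝ) := Nat.cast_nonneg t
            rw [pow_succ]
            nlinarith [mul_nonneg (mul_nonneg (mul_nonneg hLh0 hp) hnx)
              (add_nonneg hLf ht0)]
        _ = Lh * ((t+1:ℕ):ℝ) * (Lf+1)^(t+1) * ‖x - xstar‖ := by push_cast; ring
  have hD : ∀ x, ‖g^[T] x - xstar‖ ≤ (3/4) * ‖x - xstar‖ := by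
    intro x
    have hnx : 0 ≤ ‖x - xstar‖ := norm_nonneg _
    have h1 : ‖g^[T] x - xstar‖ ≤ ‖g^[T] x - f^[T] x‖ + ‖f^[T] x - xstar‖ := by
      have : g^[T] x - xstar = (g^[T] x - f^[T] x) + (f^[T] x - xstar) := by abel
      rw [this]; exact norm_add_le _ _
    have h2 := hC x T
    have h3 := hstab x T
    have h4 : Lh * T * (Lf+1)^T * ‖x - xstar‖ ≤ (1/4) * ‖x - xstar‖ := by
      have : Lh * ((T:ℝ) * (Lf+1)^T) ≤ 1/4 := by rw [← hM]; linarith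
      nlinarith
    have h5 : k * ‖x - xstar‖ * Real.exp (-lam * T) ≤ (1/2) * ‖x - xstar‖ := by
      have := mul_le_mul_of_nonneg_right hThalf hnx
      nlinarith [Real.exp_pos (-lam * (T:ℝ))]
    linarith
  have hE : ∀ x (m : ℕ), ‖g^[m*T] x - xstar‖ ≤ (3/4)^m * ‖x - xstar‖ := by
    intro x m
    induction m with
    | zero => simp
    | succ m ih =>
      have : g^[(m+1)*T] x = g^[T] (g^[m*T] x) := by
        rw [← Function.iterate_add_apply]
        congr 1
        ring
      rw [this]
      calc ‖g^[T] (g^[m*T] x) - xstar‖ ≤ (3/4) * ‖g^[m*T] x - xstar‖ := hD _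
        _ ≤ (3/4) * ((3/4)^m * ‖x - xstar‖) := by
            exact mul_le_mul_of_nonneg_left ih (by norm_num)
        _ = (3/4)^(m+1) * ‖x - xstar‖ := by ring
  -- final constants
  have hlog : (0:ℝ) < Real.log (4/3) := Real.log_pos (by norm_num)
  refine ⟨(4/3) * (Lf+1)^T, ?_, Real.log (4/3) / T, by positivity, ?_⟩
  · have : (1:ℝ) ≤ (Lf+1)^T := one_le_pow₀ (by linarith)
    nlinarith
  intro x₀ t
  have hnx : 0 ≤ ‖x₀ - xstar‖ := norm_nonneg _
  set m := t / T with hm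
  set r := t % T with hr
  have htmr : r + T * m = t := Nat.mod_add_div t T
  have hrT : r < T := Nat.mod_lt _ (by omega)
  have hsplit : g^[t] x₀ = g^[r] (g^[m*T] x₀) := by
    rw [← Function.iterate_add_apply]
    congr 1
    rw [mul_comm m T]
    exact htmr.symm
  have step1 : ‖g^[t] x₀ - xstar‖ ≤ (Lf+1)^T * ((3/4)^m * ‖x₀ - xstar‖) := by
    rw [hsplit]
    calc ‖g^[r] (g^[m*T] x₀) - xstar‖ ≤ (Lf + Lh)^r * ‖g^[m*T] x₀ - xstar‖ := hB _ _
      _ ≤ (Lf+1)^r * ‖g^[m*T] x₀ - xstar‖ :=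
          mul_le_mul_of_nonneg_right (hpow r) (norm_nonneg _)
      _ ≤ (Lf+1)^T * ‖g^[m*T] x₀ - xstar‖ := by
          apply mul_le_mul_of_nonneg_right _ (norm_nonneg _)
          exact pow_le_pow_right₀ (by linarith) hrT.le
      _ ≤ (Lf+1)^T * ((3/4)^m * ‖x₀ - xstar‖) :=
          mul_le_mul_of_nonneg_left (hE x₀ m) (by positivity)
  have step2 : ((3:ℝ)/4)^m ≤ (4/3) * Real.exp (-(Real.log (4/3) / T) * t) := by
    have hexp : ((3:ℝ)/4)^m = Real.exp ((m:ℝ) * Real.log (3/4)) := by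
      rw [Real.exp_nat_mul, Real.exp_log (by norm_num : (0:ℝ) < 3/4)]
    have hlog34 : Real.log (3/4) = - Real.log (4/3) := by
      rw [show (3:ℝ)/4 = (4/3)⁻¹ by norm_num, Real.log_inv]
    have htle : (t:ℝ) ≤ (m+1) * T := by
      have : t ≤ (m+1) * T := by
        calc t = r + T * m := htmr.symm

          _ ≤ T + T * m := Nat.add_le_add_right hrT.le _
          _ = (m+1) * T := by ring
      exact_mod_cast this
    have harg : -(Real.log (4/3) / T) * t ≥ -(Real.log (4/3)) * (m+1) := by
      rw [ge_iff_le, neg_mul, neg_mul, neg_le_neg_iff]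
      rw [div_mul_eq_mul_div, div_le_iff₀ hT0]
      calc Real.log (4/3) * t ≤ Real.log (4/3) * ((m+1) * T) :=
            mul_le_mul_of_nonneg_left htle hlog.le
        _ = Real.log (4/3) * (m+1) * T := by ring
    have : Real.exp ((m:ℝ) * Real.log (3/4))
        = (4/3) * Real.exp (-(Real.log (4/3)) * (m+1)) := by
      calc Real.exp ((m:ℝ) * Real.log (3/4))
          = Real.exp (Real.log (4/3) + -(Real.log (4/3)) * ((m:ℝ)+1)) := by
            rw [hlog34]; congr 1; ring
        _ = Real.exp (Real.log (4/3)) * Real.exp (-(Real.log (4/3)) * ((m:ℝ)+1)) :=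
            Real.exp_add _ _
        _ = (4/3) * Real.exp (-(Real.log (4/3)) * ((m:ℝ)+1)) := by
            rw [Real.exp_log (by norm_num : (0:ℝ) < 4/3)]
    calc ((3:ℝ)/4)^m = Real.exp ((m:ℝ) * Real.log (3/4)) := hexp
      _ = (4/3) * Real.exp (-(Real.log (4/3)) * (m+1)) := this
      _ ≤ (4/3) * Real.exp (-(Real.log (4/3) / T) * t) := by
          apply mul_le_mul_of_nonneg_left (Real.exp_le_exp.mpr harg) (by norm_num)
  calc ‖(fun x => f x + h x)^[t] x₀ - xstar‖ = ‖g^[t] x₀ - xstar‖ := rfl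
    _ ≤ (Lf+1)^T * ((3/4)^m * ‖x₀ - xstar‖) := step1
    _ ≤ (Lf+1)^T * ((4/3) * Real.exp (-(Real.log (4/3) / T) * t) * ‖x₀ - xstar‖) := by
        apply mul_le_mul_of_nonneg_left _ (by positivity)
        exact mul_le_mul_of_nonneg_right step2 hnx
    _ = (4/3) * (Lf+1)^T * ‖x₀ - xstar‖ * Real.exp (-(Real.log (4/3) / T) * t) := by ring
end

section
/- Let x⋆ be a fixed point of the autonomous system x_{t+1} = f(x_t), where f : D → ℝ^n is continuously differentiable on D = {x ∈ ℝ^n : ‖x − x⋆‖ < r}. Let k, λ, r₀ > 0 with r₀ < r/k and D₀ = {x : ‖x − x⋆‖ < r₀}, and assume every solution satisfies ‖x(t, x₀) − x⋆‖ ≤ k‖x₀ − x⋆‖e^{−λt} for all x₀ ∈ D₀ and all t ≥ 0. Then there exist a function V : D₀ → ℝ and constants c₁, c₂, c₃, c₄ > 0 such that for all x, y ∈ D₀: (i) c₁‖x − x⋆‖² ≤ V(x) ≤ c₂‖x − x⋆‖²; (ii) V(f(x)) − V(x) ≤ −c₃‖x − x⋆‖² (whenever f(x) ∈ D₀); (iii)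 |V(x) − V(y)| ≤ c₄‖x − y‖(‖x − x⋆‖ + ‖y − x⋆‖). -/
set_option maxHeartbeats 1000000

/-- **Converse Lyapunov theorem (exponential stability implies a Lyapunov function).**
Let `xstar` be a fixed point of `x_{t+1} = f(x_t)` with `f` continuously differentiable
on `D = B_r(xstar)`, and suppose solutions starting in `D₀ = B_{r₀}(xstar)` (with
`r₀ < r/k`) satisfy `‖x(t,x₀) − xstar‖ ≤ k‖x₀ − xstar‖ e^{−λt}`. Then there is a
function `V` on `D₀` with quadratic lower/upper bounds, quadratic decrease along the
dynamics, and a local Lipschitz-type estimate. (Euclidean norm on `ℝ^n`.) -/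
theorem stmt12 {n : ℕ} (f : EuclideanSpace ℝ (Fin n) → EuclideanSpace ℝ (Fin n))
    (xstar : EuclideanSpace ℝ (Fin n)) (r : ℝ) (hr : 0 < r)
    (hdiff : ContDiffOn ℝ 1 f (Metric.ball xstar r))
    (hfix : f xstar = xstar)
    (k lam r₀ : ℝ) (hk : 0 < k) (hlam : 0 < lam) (hr₀ : 0 < r₀) (hr₀r : r₀ < r / k)
    (hstab : ∀ x₀ ∈ Metric.ball xstar r₀, ∀ t : ℕ,
      ‖f^[t] x₀ - xstar‖ ≤ k * ‖x₀ - xstar‖ * Real.exp (-lam * t)) :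
    ∃ V : EuclideanSpace ℝ (Fin n) → ℝ, ∃ c₁ c₂ c₃ c₄ : ℝ,
      0 < c₁ ∧ 0 < c₂ ∧ 0 < c₃ ∧ 0 < c₄ ∧
      (∀ x ∈ Metric.ball xstar r₀,
        c₁ * ‖x - xstar‖ ^ 2 ≤ V x ∧ V x ≤ c₂ * ‖x - xstar‖ ^ 2) ∧
      (∀ x ∈ Metric.ball xstar r₀, f x ∈ Metric.ball xstar r₀ →
        V (f x) - V x ≤ -c₃ * ‖x - xstar‖ ^ 2) ∧
      (∀ x ∈ Metric.ball xstar r₀, ∀ y ∈ Metric.ball xstar r₀,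
        |V x - V y| ≤ c₄ * ‖x - y‖ * (‖x - xstar‖ + ‖y - xstar‖)) := by
  rcases subsingleton_or_nontrivial (EuclideanSpace ℝ (Fin n)) with hsub | hnt
  · refine ⟨fun _ => 0, 1, 1, 1, 1, one_pos, one_pos, one_pos, one_pos, ?_, ?_, ?_⟩ <;>
      intros <;> simp [Subsingleton.elim (_ - xstar) 0]
  -- k ≥ 1
  have hk1 : 1 ≤ k := by
    obtain ⟨v, hv⟩ := exists_ne (0 : EuclideanSpace ℝ (Fin n))
    have hvn : 0 < ‖v‖ := norm_pos_iff.mpr hv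
    set x : EuclideanSpace ℝ (Fin n) := xstar + (r₀ / (2 * ‖v‖)) • v with hx
    have hxn : ‖x - xstar‖ = r₀ / 2 := by
      rw [hx, add_sub_cancel_left, norm_smul, Real.norm_eq_abs,
        abs_of_pos (by positivity)]
      field_simp
    have hxb : x ∈ Metric.ball xstar r₀ := by
      rw [Metric.mem_ball, dist_eq_norm, hxn]; linarith
    have := hstab x hxb 0
    simp only [Function.iterate_zero, id_eq, Nat.cast_zero, mul_zero, Real.exp_zero,
      mul_one] at this
    rw [hxn] at this
    nlinarith
  -- choose N with k^2 * exp(-lam N)^2 ≤ 1/2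
  set N : ℕ := ⌈2 * k ^ 2 / lam⌉₊ + 1 with hN
  have hN1 : 1 ≤ N := Nat.le_add_left 1 _
  have hNpos : (0:ℝ) < N := by positivity
  have hNge : 2 * k ^ 2 ≤ lam * N := by
    have h1 : 2 * k ^ 2 / lam ≤ (N : ℝ) := by
      calc 2 * k ^ 2 / lam ≤ (⌈2 * k ^ 2 / lam⌉₊ : ℝ) := Nat.le_ceil _
      _ ≤ (N : ℝ) := by exact_mod_cast Nat.le_succ _
    calc 2 * k ^ 2 = lam * (2 * k ^ 2 / lam) := by field_simp
    _ ≤ lam * N := by nlinarith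
  have he1 : ∀ t : ℕ, Real.exp (-lam * t) ≤ 1 := fun t =>
    Real.exp_le_one_iff.mpr (by
      have := mul_nonneg hlam.le (Nat.cast_nonneg t); linarith)
  have hkey : k ^ 2 * Real.exp (-lam * N) ^ 2 ≤ 1 / 2 := by
    have hepos : 0 < Real.exp (-lam * N) := Real.exp_pos _
    have hbig : lam * N ≤ Real.exp (lam * N) := le_trans (by linarith)
      (Real.add_one_le_exp (lam * N))
    have h2 : Real.exp (-lam * N) ≤ (lam * N)⁻¹ := by
      rw [neg_mul, Real.exp_neg]
      exact inv_anti₀ (by positivity) hbig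
    have h3 : k ^ 2 * Real.exp (-lam * N) ^ 2 ≤ k ^ 2 * Real.exp (-lam * N) := by
      calc k ^ 2 * Real.exp (-lam * N) ^ 2 = (k ^ 2 * Real.exp (-lam * N)) * Real.exp (-lam * N) := by ring
      _ ≤ (k ^ 2 * Real.exp (-lam * N)) * 1 := mul_le_mul_of_nonneg_left (he1 N) (by positivity)
      _ = k ^ 2 * Real.exp (-lam * N) := mul_one _
    have h4 : k ^ 2 * Real.exp (-lam * N) ≤ k ^ 2 * (lam * N)⁻¹ := by nlinarith
    have h5 : k ^ 2 * (lam * N)⁻¹ ≤ 1 / 2 := by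
      have hln : 0 < lam * N := by positivity
      have hi : 0 < (lam * N)⁻¹ := inv_pos.mpr hln
      have hinv : (lam * N) * (lam * N)⁻¹ = 1 := mul_inv_cancel₀ hln.ne'
      nlinarith [mul_le_mul_of_nonneg_right hNge hi.le]
    linarith
  -- trajectories stay in the closed ball of radius k * r₀
  have htraj : ∀ x ∈ Metric.ball xstar r₀, ∀ t : ℕ,
      f^[t] x ∈ Metric.closedBall xstar (k * r₀) := by
    intro x hx t
    have h1 := hstab x hx t
    have hxr : ‖x - xstar‖ < r₀ := by rwa [Metric.mem_ball, dist_eq_norm] at hx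
    have hxr0 : 0 ≤ ‖x - xstar‖ := norm_nonneg _
    rw [Metric.mem_closedBall, dist_eq_norm]
    have hh : k * ‖x - xstar‖ * Real.exp (-lam * t) ≤ k * ‖x - xstar‖ * 1 :=
      mul_le_mul_of_nonneg_left (he1 t) (by positivity)
    nlinarith
  -- Lipschitz constant for f on the closed ball
  have hball : Metric.closedBall xstar (k * r₀) ⊆ Metric.ball xstar r := by
    apply Metric.closedBall_subset_ball
    rw [div_eq_mul_inv] at hr₀r
    calc k * r₀ < k * (r * k⁻¹) := by nlinarith
    _ = r := by field_simp
  obtain ⟨C, hC⟩ : ∃ C, ∀ x ∈ Metric.closedBall xstar (k * r₀),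
      ‖fderivWithin ℝ f (Metric.ball xstar r) x‖ ≤ C := by
    have hcont : ContinuousOn (fderivWithin ℝ f (Metric.ball xstar r))
        (Metric.ball xstar r) :=
      hdiff.continuousOn_fderivWithin Metric.isOpen_ball.uniqueDiffOn le_rfl
    exact (isCompact_closedBall _ _).exists_bound_of_continuousOn
      (hcont.mono hball)
  set L : ℝ := max C 1 with hL
  have hL1 : 1 ≤ L := le_max_right _ _
  have hL0 : 0 ≤ L := le_trans zero_le_one hL1
  have hlip : ∀ x ∈ Metric.closedBall xstar (k * r₀),
      ∀ y ∈ Metric.closedBall xstar (k * r₀), ‖f x - f y‖ ≤ L * ‖x - y‖ := by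
    intro x hx y hy
    exact (convex_closedBall xstar (k * r₀)).norm_image_sub_le_of_norm_hasFDerivWithin_le
      (f' := fun z => fderivWithin ℝ f (Metric.ball xstar r) z)
      (fun z hz => (((hdiff.differentiableOn one_ne_zero) z (hball hz)).hasFDerivWithinAt).mono hball)
      (fun z hz => le_trans (hC z hz) (le_max_left _ _)) hy hx
  -- iterates are L^t Lipschitz on the ball r₀
  have hilip : ∀ x ∈ Metric.ball xstar r₀, ∀ y ∈ Metric.ball xstar r₀, ∀ t : ℕ,
      ‖f^[t] x - f^[t] y‖ ≤ L ^ t * ‖x - y‖ := by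
    intro x hx y hy t
    induction t with
    | zero => simp
    | succ t ih =>
      rw [Function.iterate_succ_apply', Function.iterate_succ_apply']
      calc ‖f (f^[t] x) - f (f^[t] y)‖ ≤ L * ‖f^[t] x - f^[t] y‖ :=
        hlip _ (htraj x hx t) _ (htraj y hy t)
      _ ≤ L * (L ^ t * ‖x - y‖) := by nlinarith
      _ = L ^ (t + 1) * ‖x - y‖ := by ring
  -- define V
  set V : EuclideanSpace ℝ (Fin n) → ℝ :=
    fun x => ∑ t ∈ Finset.range N, ‖f^[t] x - xstar‖ ^ 2 with hV
  refine ⟨V, 1, N * k ^ 2, 1/2, N * L ^ N * k, one_pos, by positivity, by norm_num,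
    by positivity, ?_, ?_, ?_⟩
  · -- quadratic bounds
    intro x hx
    constructor
    · rw [one_mul, hV]
      have h0 : ‖f^[0] x - xstar‖ ^ 2 = ‖x - xstar‖ ^ 2 := by simp
      calc ‖x - xstar‖ ^ 2 = ‖f^[0] x - xstar‖ ^ 2 := h0.symm
      _ ≤ ∑ t ∈ Finset.range N, ‖f^[t] x - xstar‖ ^ 2 :=
        Finset.single_le_sum (f := fun t => ‖f^[t] x - xstar‖ ^ 2)
          (fun t _ => by positivity) (Finset.mem_range.mpr hN1)
    · rw [hV]
      calc ∑ t ∈ Finset.range N, ‖f^[t] x - xstar‖ ^ 2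
          ≤ ∑ _t ∈ Finset.range N, k ^ 2 * ‖x - xstar‖ ^ 2 := by
            apply Finset.sum_le_sum
            intro t _
            have h6 : ‖f^[t] x - xstar‖ ≤ k * ‖x - xstar‖ :=
              le_trans (hstab x hx t) (by
                nlinarith [mul_le_mul_of_nonneg_left (he1 t)
                  (mul_nonneg hk.le (norm_nonneg (x - xstar)))])
            calc ‖f^[t] x - xstar‖ ^ 2 ≤ (k * ‖x - xstar‖) ^ 2 :=
              pow_le_pow_left₀ (norm_nonneg _) h6 2
            _ = k ^ 2 * ‖x - xstar‖ ^ 2 := by ring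
      _ = N * k ^ 2 * ‖x - xstar‖ ^ 2 := by
            rw [Finset.sum_const, Finset.card_range, nsmul_eq_mul]; ring
  · -- decrease
    intro x hx _
    have hshift : V (f x) = (∑ t ∈ Finset.range (N + 1), ‖f^[t] x - xstar‖ ^ 2)
        - ‖f^[0] x - xstar‖ ^ 2 := by
      rw [hV]
      rw [Finset.sum_range_succ' (fun t => ‖f^[t] x - xstar‖ ^ 2) N]
      simp [Function.iterate_succ_apply]
    have hVx : V x = (∑ t ∈ Finset.range (N + 1), ‖f^[t] x - xstar‖ ^ 2)
        - ‖f^[N] x - xstar‖ ^ 2 := by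
      rw [hV, Finset.sum_range_succ]; ring
    have hNbound : ‖f^[N] x - xstar‖ ^ 2 ≤ 1/2 * ‖x - xstar‖ ^ 2 := by
      have h4 : 0 ≤ ‖x - xstar‖ := norm_nonneg _
      calc ‖f^[N] x - xstar‖ ^ 2 ≤ (k * ‖x - xstar‖ * Real.exp (-lam * N)) ^ 2 :=
        pow_le_pow_left₀ (norm_nonneg _) (hstab x hx N) 2
      _ = (k ^ 2 * Real.exp (-lam * N) ^ 2) * ‖x - xstar‖ ^ 2 := by ring
      _ ≤ 1/2 * ‖x - xstar‖ ^ 2 := by nlinarith [hkey, sq_nonneg ‖x - xstar‖]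
    rw [hshift, hVx]
    simp only [Function.iterate_zero, id_eq]
    nlinarith
  · -- Lipschitz-type estimate
    intro x hx y hy
    have hterm : ∀ t ∈ Finset.range N,
        |‖f^[t] x - xstar‖ ^ 2 - ‖f^[t] y - xstar‖ ^ 2|
          ≤ L ^ N * k * ‖x - y‖ * (‖x - xstar‖ + ‖y - xstar‖) := by
      intro t ht
      have ha : 0 ≤ ‖f^[t] x - xstar‖ := norm_nonneg _
      have hb : 0 ≤ ‖f^[t] y - xstar‖ := norm_nonneg _
      have hdiffn : |‖f^[t] x - xstar‖ - ‖f^[t] y - xstar‖| ≤ ‖f^[t] x - f^[t] y‖ := by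
        have := abs_norm_sub_norm_le (f^[t] x - xstar) (f^[t] y - xstar)
        simpa [sub_sub_sub_cancel_right] using this
      have hfac : |‖f^[t] x - xstar‖ ^ 2 - ‖f^[t] y - xstar‖ ^ 2|
          = |‖f^[t] x - xstar‖ - ‖f^[t] y - xstar‖| * (‖f^[t] x - xstar‖ + ‖f^[t] y - xstar‖) := by
        rw [← abs_of_nonneg (a := ‖f^[t] x - xstar‖ + ‖f^[t] y - xstar‖) (by positivity),
          ← abs_mul]
        ring_nf
      have hLt : L ^ t ≤ L ^ N := pow_le_pow_right₀ hL1 (le_of_lt (Finset.mem_range.mp ht))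
      have h1 : ‖f^[t] x - f^[t] y‖ ≤ L ^ N * ‖x - y‖ :=
        le_trans (hilip x hx y hy t) (by nlinarith [norm_nonneg (x - y)])
      have h2 : ‖f^[t] x - xstar‖ ≤ k * ‖x - xstar‖ :=
        le_trans (hstab x hx t) (by
          nlinarith [mul_le_mul_of_nonneg_left (he1 t)
            (mul_nonneg hk.le (norm_nonneg (x - xstar)))])
      have h3 : ‖f^[t] y - xstar‖ ≤ k * ‖y - xstar‖ :=
        le_trans (hstab y hy t) (by
          nlinarith [mul_le_mul_of_nonneg_left (he1 t)
            (mul_nonneg hk.le (norm_nonneg (y - xstar)))])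
      rw [hfac]
      have habs0 : 0 ≤ |‖f^[t] x - xstar‖ - ‖f^[t] y - xstar‖| := abs_nonneg _
      have hn0 : 0 ≤ ‖x - y‖ := norm_nonneg _
      have hnx : 0 ≤ ‖x - xstar‖ := norm_nonneg _
      have hny : 0 ≤ ‖y - xstar‖ := norm_nonneg _
      have hLN : 0 ≤ L ^ N := by positivity
      calc |‖f^[t] x - xstar‖ - ‖f^[t] y - xstar‖| * (‖f^[t] x - xstar‖ + ‖f^[t] y - xstar‖)
          ≤ (L ^ N * ‖x - y‖) * (k * ‖x - xstar‖ + k * ‖y - xstar‖) := by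
            apply mul_le_mul (le_trans hdiffn h1) (by linarith) (by positivity) (by positivity)
      _ = L ^ N * k * ‖x - y‖ * (‖x - xstar‖ + ‖y - xstar‖) := by ring
    calc |V x - V y|
        = |∑ t ∈ Finset.range N, (‖f^[t] x - xstar‖ ^ 2 - ‖f^[t] y - xstar‖ ^ 2)| := by
          rw [hV, Finset.sum_sub_distrib]
    _ ≤ ∑ t ∈ Finset.range N, |‖f^[t] x - xstar‖ ^ 2 - ‖f^[t] y - xstar‖ ^ 2| :=
          Finset.abs_sum_le_sum_abs _ _
    _ ≤ ∑ _t ∈ Finset.range N, L ^ N * k * ‖x - y‖ * (‖x - xstar‖ + ‖y - xstar‖) :=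
          Finset.sum_le_sum hterm
    _ = N * L ^ N * k * ‖x - y‖ * (‖x - xstar‖ + ‖y - xstar‖) := by
          rw [Finset.sum_const, Finset.card_range, nsmul_eq_mul]; ring
end

section
/- Let f : ℝ^n → ℝ be twice continuously differentiable, w⋆ a minimum with ∇f(w⋆) = 0 and positive definite Hessian H = ∇²f(w⋆) with eigenvalues μ₁,…,μ_n, and let α > 0, ε > 0, β ∈ (0,1). Consider the RMSProp iteration v_{t+1} = β v_t + (1−β)∇f(w_t)², w_{t+1} = w_t − α ∇f(w_t)/√(v_{t+1} + ε²) (componentwise). The Jacobian of this map at the fixed point (0, w⋆) is block diagonal with blocks βI and I − (α/ε)H, so its eigenvalues are β (n-fold) and 1 − (α/ε)μ_i for i = 1,…,n. If max_i μ_i < 2ε/α, then the spectral radius of this Jacobian is strictly less than 1 and RMSProp converges locally with exponential rate to (0, w⋆). -/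
open Polynomial

/-- The gradient of `f : ℝ^n → ℝ`, taken componentwise via partial derivatives. -/
noncomputable def grad {n : ℕ} (f : (Fin n → ℝ) → ℝ) (w : Fin n → ℝ) : Fin n → ℝ :=
  fun i => fderiv ℝ f w (Pi.single i 1)

/-- The Hessian matrix of `f : ℝ^n → ℝ` at `w`. -/
noncomputable def hess {n : ℕ} (f : (Fin n → ℝ) → ℝ) (w : Fin n → ℝ) :
    Matrix (Fin n) (Fin n) ℝ :=
  Matrix.of fun i j => fderiv ℝ (fun u => fderiv ℝ f u (Pi.single j 1)) w (Pi.single i 1)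

/-- The RMSProp map on states `(v, w)`:
`v⁺ = βv + (1−β)g(w)²`, `w⁺ = w − α g(w)/√(v⁺ + ε²)` (componentwise). -/
noncomputable def rmsProp {n : ℕ} (β α ε : ℝ) (g : (Fin n → ℝ) → (Fin n → ℝ))
    (x : (Fin n → ℝ) × (Fin n → ℝ)) : (Fin n → ℝ) × (Fin n → ℝ) :=
  let v' := β • x.1 + (1 - β) • (g x.2 * g x.2)
  (v', x.2 - α • (g x.2 / (fun i => Real.sqrt (v' i + ε ^ 2))))

/-
At the fixed point `(0, w⋆)` the gradient vanishes, so to first order the `v`-update only sees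
`βv` and the denominator `√(v⁺ + ε²)` is frozen at `ε`: the Jacobian is
`J = diag(βI, I − (α/ε)H)`. As `H` is symmetric, so is `J`, and the Euclidean operator norm of a
symmetric matrix is the largest modulus of its eigenvalues, here `< 1`. A map whose derivative at
a fixed point is a contraction for some norm converges to it exponentially fast from nearby
points, and conjugating by the linear identification of `ℝⁿ × ℝⁿ` with Euclidean `ℝ^(n+n)`
transfers this to the sup norm of the state space.
-/

open Function Matrix
open scoped Matrix.Norms.L2Operator

def IsLocallyExpStable {E : Type*} [SeminormedAddCommGroup E] (Φ : E → E) (q : E) : Prop :=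
  ∃ δ > (0 : ℝ), ∃ C ≥ (0 : ℝ), ∃ c : ℝ, 0 < c ∧ c < 1 ∧
    ∀ x₀ : E, ‖x₀ - q‖ < δ → ∀ t : ℕ, ‖Φ^[t] x₀ - q‖ ≤ C * c ^ t * ‖x₀ - q‖

section
variable {𝕜 E F : Type*} [NontriviallyNormedField 𝕜] [NormedAddCommGroup E] [NormedSpace 𝕜 E]
  [NormedAddCommGroup F] [NormedSpace 𝕜 F] {Φ : E → E} {q : E}

theorem isLocallyExpStable_of_hasFDerivAt {L : E →L[𝕜] E} (hq : IsFixedPt Φ q)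
    (hΦ : HasFDerivAt Φ L q) (hL : ‖L‖ < 1) : IsLocallyExpStable Φ q := by
  obtain ⟨c, hLc, hc1⟩ := exists_between hL
  have hc0 : 0 < c := (norm_nonneg L).trans_lt hLc
  obtain ⟨δ, hδ, hball⟩ := Metric.eventually_nhds_iff.1 (hΦ.isLittleO.def (sub_pos.2 hLc))
  have hstep : ∀ x, ‖x - q‖ < δ → ‖Φ x - q‖ ≤ c * ‖x - q‖ := fun x hx => calc
    ‖Φ x - q‖ = ‖L (x - q) + (Φ x - Φ q - L (x - q))‖ := by rw [hq.eq]; abel_nf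
    _ ≤ ‖L‖ * ‖x - q‖ + (c - ‖L‖) * ‖x - q‖ :=
      norm_add_le_of_le (L.le_opNorm _) (hball (by rwa [dist_eq_norm]))
    _ = c * ‖x - q‖ := by ring
  refine ⟨δ, hδ, 1, zero_le_one, c, hc0, hc1, fun x hx t => ?_⟩
  rw [one_mul]
  induction t with
  | zero => simp
  | succ t ih =>
    have hclose : ‖Φ^[t] x - q‖ < δ :=
      ih.trans_lt (lt_of_le_of_lt (mul_le_of_le_one_left (norm_nonneg _)
        (pow_le_one₀ hc0.le hc1.le)) hx)
    rw [iterate_succ_apply', pow_succ']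
    calc ‖Φ (Φ^[t] x) - q‖ ≤ c * ‖Φ^[t] x - q‖ := hstep _ hclose
      _ ≤ c * (c ^ t * ‖x - q‖) := by gcongr
      _ = c * c ^ t * ‖x - q‖ := by ring

theorem IsLocallyExpStable.of_semiconj (T : E ≃L[𝕜] F) {Ψ : F → F}
    (hT : Semiconj T Φ Ψ) (hΨ : IsLocallyExpStable Ψ (T q)) :
    IsLocallyExpStable Φ q := by
  obtain ⟨δ, hδ, C, hC, c, hc0, hc1, hconv⟩ := hΨ
  set a := ‖(T : E →L[𝕜] F)‖
  set b := ‖(T.symm : F →L[𝕜] E)‖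
  have hT_le : ∀ x, ‖T x - T q‖ ≤ a * ‖x - q‖ := fun x => by
    rw [← map_sub]; exact (T : E →L[𝕜] F).le_opNorm _
  refine ⟨δ / (a + 1), by positivity, b * C * a, by positivity, c, hc0, hc1, fun x hx t => ?_⟩
  have hx' : ‖T x - T q‖ < δ := by
    calc ‖T x - T q‖ ≤ a * ‖x - q‖ := hT_le x
      _ ≤ (a + 1) * ‖x - q‖ := by gcongr; linarith
      _ < (a + 1) * (δ / (a + 1)) := by gcongr
      _ = δ := mul_div_cancel₀ _ (by positivity)
  calc ‖Φ^[t] x - q‖ = ‖T.symm (T (Φ^[t] x) - T q)‖ := by simp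
    _ ≤ b * ‖T (Φ^[t] x) - T q‖ := (T.symm : F →L[𝕜] E).le_opNorm _
    _ ≤ b * (C * c ^ t * ‖T x - T q‖) := by
      rw [(hT.iterate_right t).eq]; gcongr; exact hconv _ hx' t
    _ ≤ b * (C * c ^ t * (a * ‖x - q‖)) := by gcongr; exact hT_le x
    _ = b * C * a * c ^ t * ‖x - q‖ := by ring

theorem isLocallyExpStable_of_hasFDerivAt_conj (T : E ≃L[𝕜] F) {L : E →L[𝕜] E}
    (hq : IsFixedPt Φ q) (hΦ : HasFDerivAt Φ L q)
    (hL : ‖(T : E →L[𝕜] F) ∘L L ∘L (T.symm : F →L[𝕜] E)‖ < 1) :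
    IsLocallyExpStable Φ q := by
  refine IsLocallyExpStable.of_semiconj T (Ψ := T ∘ Φ ∘ T.symm) (fun x => by simp) ?_
  refine isLocallyExpStable_of_hasFDerivAt (by simp [IsFixedPt, hq.eq]) ?_ hL
  exact T.hasFDerivAt.comp _
    (HasFDerivAt.comp (T q) (by rwa [T.symm_apply_apply]) T.symm.hasFDerivAt)
end

section
variable {n : ℕ}

-- `hess f w i j` is the `i`-th partial of `∂ⱼ f`, so the Jacobian of `grad f` is `(hess f w)ᵀ`.
theorem hasFDerivAt_grad {f : (Fin n → ℝ) → ℝ} (hf : ContDiff ℝ 2 f) (w : Fin n → ℝ) :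
    HasFDerivAt (grad f) ((hess f w)ᵀ.mulVecLin.toContinuousLinearMap) w := by
  refine hasFDerivAt_pi'' fun j => ?_
  have hdiff : DifferentiableAt ℝ (fun u => fderiv ℝ f u (Pi.single j 1)) w :=
    ((hf.fderiv_right (m := 1) le_rfl).clm_apply contDiff_const).differentiable one_ne_zero w
  refine hdiff.hasFDerivAt.congr_fderiv ?_
  apply ContinuousLinearMap.coe_injective
  refine LinearMap.pi_ext fun k x => ?_
  have hsingle : (Pi.single k x : Fin n → ℝ) = x • Pi.single k 1 := by
    rw [← Pi.single_smul, smul_eq_mul, mul_one]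
  simp [hess, hsingle]
end

section
variable {n : ℕ}
open ContinuousLinearMap
local notation "E" => Fin n → ℝ

theorem isFixedPt_rmsProp (β α ε : ℝ) {g : E → E} {w : E} (hg0 : g w = 0) :
    IsFixedPt (rmsProp β α ε g) (0, w) := by
  ext i <;> simp [rmsProp, hg0]

theorem hasFDerivAt_rmsProp (β α : ℝ) {ε : ℝ} (hε : 0 < ε) {g : E → E} {G : E →L[ℝ] E} {w : E}
    (hg : HasFDerivAt g G w) (hg0 : g w = 0) :
    HasFDerivAt (rmsProp β α ε g)
      ((β • fst ℝ E E).prod (snd ℝ E E - (α / ε) • G ∘L snd ℝ E E)) (0, w) := by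
  -- `g` vanishes at `w`, so the product rule kills every term in which `g` is not differentiated.
  set q : E × E := (0, w)
  have hgq : HasFDerivAt (fun x : E × E => g x.2) (G ∘L snd ℝ E E) q :=
    hg.comp q hasFDerivAt_snd
  have hsq : HasFDerivAt (fun x : E × E => g x.2 * g x.2) (0 : E × E →L[ℝ] E) q :=
    (hgq.fun_mul hgq).congr_fderiv (by simp [q, hg0])
  set V := fun x : E × E => β • x.1 + (1 - β) • (g x.2 * g x.2)
  have hV : HasFDerivAt V (β • fst ℝ E E) q :=
    ((hasFDerivAt_fst.const_smul β).add (hsq.const_smul (1 - β))).congr_fderiv (by simp)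
  have hVq : V q = 0 := by simp [V, q, hg0]
  have hroot : DifferentiableAt ℝ (fun x i => (√(V x i + ε ^ 2))⁻¹) q := by
    refine differentiableAt_pi.2 fun i => ?_
    have hVi : V q i + ε ^ 2 = ε ^ 2 := by simp [hVq]
    refine (((differentiableAt_pi.1 hV.differentiableAt i).add_const _).sqrt ?_).inv ?_
    · rw [hVi]; positivity
    · rw [hVi, Real.sqrt_sq hε.le]; exact hε.ne'
  have hdiv : HasFDerivAt (fun x => g x.2 / fun i => √(V x i + ε ^ 2))
      (ε⁻¹ • G ∘L snd ℝ E E) q := by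
    have hfun : (fun x => g x.2 / fun i => √(V x i + ε ^ 2)) =
        fun x => g x.2 * fun i => (√(V x i + ε ^ 2))⁻¹ := funext fun x => div_eq_mul_inv _ _
    have hinv : (fun i => (√(V q i + ε ^ 2))⁻¹) = algebraMap ℝ E ε⁻¹ := by
      ext i; simp [hVq, Real.sqrt_sq hε.le]
    rw [hfun]
    exact (hgq.fun_mul hroot.hasFDerivAt).congr_fderiv (by simp [q, hg0, hinv, algebraMap_smul])
  exact hV.prodMk (hasFDerivAt_snd.sub ((hdiv.const_smul α).congr_fderiv (by
    rw [smul_smul, div_eq_mul_inv])))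
end

namespace Matrix

section
variable {K ι : Type*} [Field K] [Fintype ι] [DecidableEq ι] {H : Matrix ι ι K} {μ : ι → K}

theorem charpoly_smul_of_charpoly_eq_prod [Infinite K] (hH : H.charpoly = ∏ i, (X - C (μ i)))
    (c : K) : (c • H).charpoly = ∏ i, (X - C (c * μ i)) := by
  rcases eq_or_ne c 0 with rfl | hc
  · simp only [zero_smul, zero_mul, map_zero, sub_zero, charpoly_zero, Finset.prod_const,
      Finset.card_univ]
  refine Polynomial.funext fun x => ?_
  have hscalar : scalar ι x - c • H = c • (scalar ι (x / c) - H) := by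
    ext i j
    rcases eq_or_ne i j with rfl | h
    · simp only [sub_apply, smul_apply, scalar_apply, diagonal_apply_eq, smul_eq_mul]
      field_simp
    · simp [h]
  rw [eval_charpoly, hscalar, det_smul, ← eval_charpoly, hH, eval_prod, eval_prod, Fintype.card,
    ← Finset.prod_const, ← Finset.prod_mul_distrib]
  refine Finset.prod_congr rfl fun i _ => ?_
  simp only [eval_sub, eval_X, eval_C]
  field_simp

theorem charpoly_one_sub_smul_of_charpoly_eq_prod [Infinite K]
    (hH : H.charpoly = ∏ i, (X - C (μ i))) (c : K) :
    (1 - c • H).charpoly = ∏ i, (X - C (1 - c * μ i)) := by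
  have h : 1 - c • H = (-c) • H - scalar ι (-1) := by simp [sub_eq_neg_add, add_comm]
  rw [h, charpoly_sub_scalar, charpoly_smul_of_charpoly_eq_prod hH, Polynomial.prod_comp]
  refine Finset.prod_congr rfl fun i _ => ?_
  rw [sub_comp, X_comp, C_comp]
  simp only [map_neg, map_sub, map_mul, map_one]
  ring

theorem charpoly_fromBlocks_smul_one_one_sub_smul [Infinite K]
    (hH : H.charpoly = ∏ i, (X - C (μ i))) (b c : K) :
    (fromBlocks (b • (1 : Matrix ι ι K)) 0 0 (1 - c • H)).charpoly =
      (X - C b) ^ Fintype.card ι * ∏ i, (X - C (1 - c * μ i)) := by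
  rw [charpoly_fromBlocks_zero₁₂, charpoly_one_sub_smul_of_charpoly_eq_prod hH,
    smul_one_eq_diagonal, charpoly_diagonal, Finset.prod_const, Finset.card_univ]

theorem spectrum_map_eq_range {L κ : Type*} [Field L] [Algebra K L] [Fintype κ]
    {A : Matrix ι ι K} {ν : κ → K} (hA : A.charpoly = ∏ k, (X - C (ν k))) :
    spectrum L (A.map (algebraMap K L)) = Set.range (algebraMap K L ∘ ν) := by
  ext x
  rw [mem_spectrum_iff_isRoot_charpoly, charpoly_map, hA, Polynomial.map_prod, isRoot_prod]
  simp [sub_eq_zero, eq_comm (a := x)]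

theorem spectrum_eq_range {κ : Type*} [Fintype κ] {A : Matrix ι ι K} {ν : κ → K}
    (hA : A.charpoly = ∏ k, (X - C (ν k))) :
    spectrum K A = Set.range ν := by
  simpa using spectrum_map_eq_range (L := K) hA

end

theorem IsHermitian.l2_opNorm_eq {𝕜 ι : Type*} [RCLike 𝕜] [Fintype ι] [DecidableEq ι]
    {A : Matrix ι ι 𝕜} (hA : A.IsHermitian) :
    ‖A‖ = ‖(RCLike.ofReal ∘ hA.eigenvalues : ι → 𝕜)‖ := by
  conv_lhs => rw [hA.spectral_theorem, Unitary.conjStarAlgAut_apply, ← Unitary.coe_star,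
    CStarRing.norm_mul_coe_unitary, CStarRing.norm_coe_unitary_mul]
  exact l2_opNorm_diagonal _

theorem IsHermitian.l2_opNorm_lt {𝕜 ι : Type*} [RCLike 𝕜] [Fintype ι] [DecidableEq ι]
    {A : Matrix ι ι 𝕜} (hA : A.IsHermitian) {r : ℝ} (hr : 0 < r)
    (h : ∀ x ∈ spectrum ℝ A, |x| < r) : ‖A‖ < r := by
  rw [hA.l2_opNorm_eq, pi_norm_lt_iff hr]
  intro i
  simpa using h _ (hA.eigenvalues_mem_spectrum_real i)

end Matrix

theorem abs_one_sub_div_mul_lt_one {α ε μ : ℝ} (hα : 0 < α) (hε : 0 < ε) (hμ : 0 < μ)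
    (hμα : μ < 2 * ε / α) : |1 - α / ε * μ| < 1 := by
  have hpos : 0 < α / ε * μ := by positivity
  have hlt : α / ε * μ < 2 := calc
    α / ε * μ < α / ε * (2 * ε / α) := by gcongr
    _ = 2 := by field_simp
  exact abs_lt.2 ⟨by linarith, by linarith⟩

section
variable (𝕜 ι κ : Type*) [RCLike 𝕜] [Fintype ι] [Fintype κ]

noncomputable def sumEuclideanEquiv : ((ι → 𝕜) × (κ → 𝕜)) ≃L[𝕜] EuclideanSpace 𝕜 (ι ⊕ κ) :=
  ((LinearEquiv.sumArrowLequivProdArrow ι κ 𝕜 𝕜).symm.trans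
    (WithLp.linearEquiv 2 𝕜 _).symm).toContinuousLinearEquiv

variable {𝕜 ι κ} [DecidableEq ι] [DecidableEq κ]

theorem sumEuclideanEquiv_conj {A : Matrix ι ι 𝕜} {D : Matrix κ κ 𝕜}
    {L : (ι → 𝕜) × (κ → 𝕜) →L[𝕜] (ι → 𝕜) × (κ → 𝕜)} (hL : ∀ p, L p = (A *ᵥ p.1, D *ᵥ p.2)) :
    (sumEuclideanEquiv 𝕜 ι κ : _ →L[𝕜] EuclideanSpace 𝕜 (ι ⊕ κ)) ∘L L ∘L
        ((sumEuclideanEquiv 𝕜 ι κ).symm : EuclideanSpace 𝕜 (ι ⊕ κ) →L[𝕜] _) =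
      toEuclideanCLM (𝕜 := 𝕜) (n := ι ⊕ κ) (fromBlocks A 0 0 D) := by
  ext x k
  rcases k with i | i <;> simp [sumEuclideanEquiv, hL, fromBlocks_mulVec] <;> rfl
end

/-- **RMSProp: Jacobian at the fixed point, its eigenvalues, and local convergence.**
At a minimum `wstar` of `f ∈ C²` with positive definite Hessian `H` having eigenvalues
`μᵢ`, the Jacobian of the RMSProp map at `(0, wstar)` is block diagonal with blocks `βI`
and `I − (α/ε)H`; its eigenvalues are `β` (`n`-fold) and `1 − (α/ε)μᵢ`. If
`μᵢ < 2ε/α` for all `i`, the spectral radius is `< 1` and RMSProp converges locally to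
`(0, wstar)` with exponential rate. -/
theorem stmt14 {n : ℕ} (f : (Fin n → ℝ) → ℝ) (hf : ContDiff ℝ 2 f)
    (wstar : Fin n → ℝ) (hcrit : grad f wstar = 0)
    (μ : Fin n → ℝ) (hpd : (hess f wstar).PosDef) (hμ : ∀ i, 0 < μ i)
    (hchar : (hess f wstar).charpoly = ∏ i, (X - C (μ i)))
    (α ε β : ℝ) (hα : 0 < α) (hε : 0 < ε) (hβ : β ∈ Set.Ioo (0 : ℝ) 1) :
    (∀ p : (Fin n → ℝ) × (Fin n → ℝ),
      fderiv ℝ (rmsProp β α ε (grad f)) (0, wstar) p =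
        (β • p.1, p.2 - (α / ε) • (hess f wstar).mulVec p.2)) ∧
    ((Matrix.fromBlocks (β • (1 : Matrix (Fin n) (Fin n) ℝ)) 0 0
        ((1 : Matrix (Fin n) (Fin n) ℝ) - (α / ε) • hess f wstar)).charpoly =
      (X - C β) ^ n * ∏ i, (X - C (1 - α / ε * μ i))) ∧
    ((∀ i, μ i < 2 * ε / α) →
      (∀ lam ∈ spectrum ℂ
          ((Matrix.fromBlocks (β • (1 : Matrix (Fin n) (Fin n) ℝ)) 0 0
            ((1 : Matrix (Fin n) (Fin n) ℝ) - (α / ε) • hess f wstar)).map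
              (fun x : ℝ => (x : ℂ))),
        ‖lam‖ < 1) ∧
      ∃ δ > (0 : ℝ), ∃ Cc ≥ (0 : ℝ), ∃ c : ℝ, 0 < c ∧ c < 1 ∧
        ∀ x₀ : (Fin n → ℝ) × (Fin n → ℝ), ‖x₀ - (0, wstar)‖ < δ →
          ∀ t : ℕ, ‖(rmsProp β α ε (grad f))^[t] x₀ - (0, wstar)‖ ≤
            Cc * c ^ t * ‖x₀ - (0, wstar)‖) := by
  set H := hess f wstar
  set J := fromBlocks (β • (1 : Matrix (Fin n) (Fin n) ℝ)) 0 0 (1 - (α / ε) • H)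
  have hH : H.IsHermitian := hpd.isHermitian
  have hHt : Hᵀ = H := by simpa [conjTranspose_eq_transpose_of_trivial] using hH.eq
  have hD := hasFDerivAt_rmsProp β α hε (hHt ▸ hasFDerivAt_grad hf wstar) hcrit
  have hJchar : J.charpoly = (X - C β) ^ n * ∏ i, (X - C (1 - α / ε * μ i)) := by
    simpa only [Fintype.card_fin] using charpoly_fromBlocks_smul_one_one_sub_smul hchar β (α / ε)
  refine ⟨fun p => by simp [hD.fderiv], hJchar, fun hμα => ?_⟩
  set ν : Fin n ⊕ Fin n → ℝ := Sum.elim (fun _ => β) fun i => 1 - α / ε * μ i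
  have hJν : J.charpoly = ∏ k, (X - C (ν k)) := by simp [hJchar, Fintype.prod_sum_type, ν]
  have hν : ∀ k, |ν k| < 1 := by
    rintro (_ | i)
    · exact (abs_lt.2 ⟨by linarith [hβ.1], hβ.2⟩ : |β| < 1)
    · exact abs_one_sub_div_mul_lt_one hα hε (hμ i) (hμα i)
  refine ⟨?_, ?_⟩
  · rw [show J.map (fun x : ℝ => (x : ℂ)) = J.map (algebraMap ℝ ℂ) from rfl,
      spectrum_map_eq_range hJν]
    rintro _ ⟨k, rfl⟩
    simpa using hν k
  have hJ : J.IsHermitian := (isHermitian_one.smul (.all β)).fromBlocks (by simp)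
    (isHermitian_one.sub (hH.smul (.all _)))
  refine isLocallyExpStable_of_hasFDerivAt_conj (sumEuclideanEquiv ℝ (Fin n) (Fin n))
    (isFixedPt_rmsProp β α ε hcrit) hD ?_
  rw [sumEuclideanEquiv_conj (A := β • 1) (D := 1 - (α / ε) • H) fun p => ?_]
  · refine hJ.l2_opNorm_lt one_pos ?_
    rw [spectrum_eq_range hJν]
    rintro _ ⟨k, rfl⟩
    exact hν k
  · simp [sub_mulVec, smul_mulVec]
end
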